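/- arXiv:1801.09037 — 9 statements merged into one kernel-verified Lean document; each statement's English description precedes it below -/
import Mathlib

section
/- Assume XᵀX is invertible and fix j ∈ Fin p. Let η_j = X·(XᵀX)⁻¹·e_j, c_j = η_j/‖η_j‖₂², and fix any ν ∈ ℝ^n and z ∈ ℝ. If β̂ is a lasso solution for (X, ν + z·c_j, λ) with β̂_j = 0, then the vector β̂_{−j} (the restriction of β̂ to the coordinates k ≠ j) is a lasso solution for the reduced problem with design X_{−j} (the matrix X with its j-th column deleted), response ν, and penalty λ. -/
open scoped BigOperators

/-- The lasso objective `f_{X,y,λ}(β) = (1/2)‖y − Xβ‖₂² + λ∑|β_j|`. -/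
noncomputable def lassoObj {n : ℕ} {κ : Type*} [Fintype κ]
    (X : Matrix (Fin n) κ ℝ) (y : Fin n → ℝ) (lam : ℝ) (β : κ → ℝ) : ℝ :=
  (1 / 2) * ∑ i, (y i - X.mulVec β i) ^ 2 + lam * ∑ j, |β j|

/-- A lasso solution is a global minimizer of the lasso objective. -/
def IsLassoSolution {n : ℕ} {κ : Type*} [Fintype κ]
    (X : Matrix (Fin n) κ ℝ) (y : Fin n → ℝ) (lam : ℝ) (βhat : κ → ℝ) : Prop :=
  ∀ β : κ → ℝ, lassoObj X y lam βhat ≤ lassoObj X y lam β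
/-- If `β̂` solves the lasso for response `ν + z·c_j` (with `c_j = η_j/‖η_j‖₂²`,
`η_j = X(XᵀX)⁻¹e_j`) and `β̂_j = 0`, then the restriction of `β̂` to the coordinates
`k ≠ j` solves the reduced lasso with design `X_{−j}` and response `ν`. -/
theorem lasso_reduced_problem {n p : ℕ} (X : Matrix (Fin n) (Fin p) ℝ)
    (lam : ℝ) (hlam : 0 < lam)
    (hinv : IsUnit (X.transpose * X)) (j : Fin p)
    (η : Fin n → ℝ)
    (hη : η = X.mulVec ((X.transpose * X)⁻¹.mulVec (Pi.single j 1)))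
    (c : Fin n → ℝ) (hc : c = (∑ i, η i ^ 2)⁻¹ • η)
    (ν : Fin n → ℝ) (z : ℝ)
    (βhat : Fin p → ℝ) (hsol : IsLassoSolution X (ν + z • c) lam βhat)
    (hj : βhat j = 0) :
    IsLassoSolution (Matrix.of fun i (k : {k : Fin p // k ≠ j}) => X i k.1) ν lam
      (fun k : {k : Fin p // k ≠ j} => βhat k.1) := by
  classical
  set R : Matrix (Fin n) {k : Fin p // k ≠ j} ℝ :=
    Matrix.of fun i (k : {k : Fin p // k ≠ j}) => X i k.1 with hR
  set ext : ({k : Fin p // k ≠ j} → ℝ) → (Fin p → ℝ) :=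
    fun b k => if h : k = j then 0 else b ⟨k, h⟩ with hextdef
  have hsumaux : ∀ (f : Fin p → ℝ), f j = 0 →
      ∑ k, f k = ∑ k : {k : Fin p // k ≠ j}, f k.1 := by
    intro f hf
    rw [← Finset.sum_erase_add _ _ (Finset.mem_univ j), hf, add_zero]
    exact Finset.sum_subtype _ (by simp [Finset.mem_erase]) _
  have hXtη : X.transpose.mulVec η = Pi.single j 1 := by
    rw [hη, Matrix.mulVec_mulVec, Matrix.mulVec_mulVec,
      Matrix.mul_nonsing_inv _ ((Matrix.isUnit_iff_isUnit_det _).mp hinv), Matrix.one_mulVec]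
  -- orthogonality of c to X β when β j = 0
  have horth : ∀ (β : Fin p → ℝ), β j = 0 → ∑ i, c i * X.mulVec β i = 0 := by
    intro β hβ
    have h1 : ∑ i, η i * X.mulVec β i = 0 := by
      have h2 : dotProduct η (X.mulVec β) = dotProduct (X.transpose.mulVec η) β := by
        rw [Matrix.dotProduct_mulVec, ← Matrix.mulVec_transpose]
      rw [hXtη, single_dotProduct, one_mul, hβ] at h2
      simpa [dotProduct] using h2
    rw [hc]
    simp only [Pi.smul_apply, smul_eq_mul, mul_assoc, ← Finset.mul_sum, h1, mul_zero]
  -- objective decomposition for β with β j = 0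
  have hobj : ∀ (β : Fin p → ℝ), β j = 0 →
      lassoObj X (ν + z • c) lam β
        = ((1/2) * ∑ i, (ν i - X.mulVec β i) ^ 2 + lam * ∑ k, |β k|)
          + (z * ∑ i, c i * ν i + (1/2) * z ^ 2 * ∑ i, c i ^ 2) := by
    intro β hβ
    have h0 := horth β hβ
    unfold lassoObj
    have hsum : ∑ i, ((ν + z • c) i - X.mulVec β i) ^ 2
        = ∑ i, ((ν i - X.mulVec β i) ^ 2 + (2 * z) * (c i * ν i)
            - (2 * z) * (c i * X.mulVec β i) + z ^ 2 * c i ^ 2) := by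
      refine Finset.sum_congr rfl fun i _ => ?_
      simp only [Pi.add_apply, Pi.smul_apply, smul_eq_mul]
      ring
    rw [hsum]
    simp only [Finset.sum_add_distrib, Finset.sum_sub_distrib, ← Finset.mul_sum, h0, mul_zero,
      sub_zero]
    ring
  -- reduced objective in terms of extension
  have hredmul : ∀ (b : {k : Fin p // k ≠ j} → ℝ) (i : Fin n),
      R.mulVec b i = X.mulVec (ext b) i := by
    intro b i
    show ∑ k : {k : Fin p // k ≠ j}, R i k * b k = ∑ k, X i k * ext b k
    rw [hsumaux (fun k => X i k * ext b k) (by simp [hextdef])]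
    refine Finset.sum_congr rfl fun k _ => ?_
    simp [hR, hextdef, k.2]
  have hredabs : ∀ (b : {k : Fin p // k ≠ j} → ℝ),
      ∑ k : {k : Fin p // k ≠ j}, |b k| = ∑ k, |ext b k| := by
    intro b
    rw [hsumaux (fun k => |ext b k|) (by simp [hextdef])]
    refine Finset.sum_congr rfl fun k _ => ?_
    simp [hextdef, k.2]
  have hredobj : ∀ (b : {k : Fin p // k ≠ j} → ℝ),
      lassoObj R ν lam b
        = (1/2) * ∑ i, (ν i - X.mulVec (ext b) i) ^ 2 + lam * ∑ k, |ext b k| := by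
    intro b
    unfold lassoObj
    rw [hredabs b]
    congr 1
    congr 1
    exact Finset.sum_congr rfl fun i _ => by rw [hredmul]
  -- βhat is the extension of its restriction
  have hβhat : ext (fun k : {k : Fin p // k ≠ j} => βhat k.1) = βhat := by
    funext k
    by_cases h : k = j
    · subst h; simp [hextdef, hj]
    · simp [hextdef, h]
  intro b
  have key := hsol (ext b)
  have e1 := hobj (ext b) (by simp [hextdef])
  have e3 := hobj (ext fun k : {k : Fin p // k ≠ j} => βhat k.1)
    (by simp [hextdef])
  rw [hβhat] at e3
  rw [e1, e3] at key
  rw [hredobj, hredobj, hβhat]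
  linarith
end

section
/- Assume XᵀX is invertible and fix j ∈ Fin p. Let η_j = X·(XᵀX)⁻¹·e_j, c_j = η_j/‖η_j‖₂², and fix ν ∈ ℝ^n. Let β̂⁻ be a lasso solution for the reduced problem with design X_{−j} (the matrix X with its j-th column deleted), response ν, and penalty λ, and set r_j = X_{−j}·β̂⁻ − ν, a_j = ‖η_j‖₂²·(x_jᵀ·r_j − λ), b_j = ‖η_j‖₂²·(x_jᵀ·r_j + λ). For each z ∈ ℝ let β̂(z) denote the unique lasso solution for (X, ν + z·c_j, λ). Then β̂(z)_j = 0 if and only if a_j ≤ z ≤ b_j; equivalently, {z ∈ ℝ : j lies in the active set of β̂(z)} = (−∞, a_j) ∪ (b_j, ∞). -/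
open scoped BigOperators

noncomputable def lgrad {n : ℕ} {κ : Type*} [Fintype κ]
    (X : Matrix (Fin n) κ ℝ) (y : Fin n → ℝ) (β₀ : κ → ℝ) (k : κ) : ℝ :=
  ∑ i, X i k * (X.mulVec β₀ i - y i)

noncomputable def lform {n : ℕ} {κ : Type*} [Fintype κ]
    (X : Matrix (Fin n) κ ℝ) (y : Fin n → ℝ) (lam : ℝ) (β₀ β : κ → ℝ) : ℝ :=
  (∑ k, lgrad X y β₀ k * (β k - β₀ k)) + lam * ((∑ k, |β k|) - ∑ k, |β₀ k|)

lemma mulVec_sub_eq {n : ℕ} {κ : Type*} [Fintype κ]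
    (X : Matrix (Fin n) κ ℝ) (β β₀ : κ → ℝ) (i : Fin n) :
    X.mulVec β i - X.mulVec β₀ i = ∑ k, X i k * (β k - β₀ k) := by
  simp [Matrix.mulVec, dotProduct, mul_sub, Finset.sum_sub_distrib]

lemma cross_term {n : ℕ} {κ : Type*} [Fintype κ]
    (X : Matrix (Fin n) κ ℝ) (y : Fin n → ℝ) (β₀ β : κ → ℝ) :
    ∑ i, (X.mulVec β₀ i - y i) * (X.mulVec β i - X.mulVec β₀ i)
      = ∑ k, lgrad X y β₀ k * (β k - β₀ k) := by
  have h : ∀ i, (X.mulVec β₀ i - y i) * (X.mulVec β i - X.mulVec β₀ i)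
      = ∑ k, X i k * (X.mulVec β₀ i - y i) * (β k - β₀ k) := by
    intro i
    rw [mulVec_sub_eq, Finset.mul_sum]
    exact Finset.sum_congr rfl fun k _ => by ring
  rw [Finset.sum_congr rfl fun i _ => h i, Finset.sum_comm]
  refine Finset.sum_congr rfl fun k _ => ?_
  rw [lgrad, Finset.sum_mul]

lemma lasso_identity {n : ℕ} {κ : Type*} [Fintype κ]
    (X : Matrix (Fin n) κ ℝ) (y : Fin n → ℝ) (lam : ℝ) (β₀ β : κ → ℝ) :
    lassoObj X y lam β = lassoObj X y lam β₀
      + (1/2) * ∑ i, (X.mulVec β i - X.mulVec β₀ i) ^ 2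
      + lform X y lam β₀ β := by
  have h : ∀ i, (y i - X.mulVec β i) ^ 2
      = (y i - X.mulVec β₀ i) ^ 2 + (X.mulVec β i - X.mulVec β₀ i) ^ 2
        + 2 * ((X.mulVec β₀ i - y i) * (X.mulVec β i - X.mulVec β₀ i)) := by
    intro i; ring
  rw [lassoObj, Finset.sum_congr rfl fun i _ => h i, Finset.sum_add_distrib,
    Finset.sum_add_distrib, ← Finset.mul_sum, cross_term X y β₀ β]
  rw [lassoObj, lform]
  ring

lemma solution_of_lform {n : ℕ} {κ : Type*} [Fintype κ]
    (X : Matrix (Fin n) κ ℝ) (y : Fin n → ℝ) (lam : ℝ) (β₀ : κ → ℝ)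
    (h : ∀ β, 0 ≤ lform X y lam β₀ β) : IsLassoSolution X y lam β₀ := by
  intro β
  have := lasso_identity X y lam β₀ β
  have hsq : 0 ≤ ∑ i, (X.mulVec β i - X.mulVec β₀ i) ^ 2 :=
    Finset.sum_nonneg fun i _ => sq_nonneg _
  nlinarith [h β]

lemma lform_nonneg_of_solution {n : ℕ} {κ : Type*} [Fintype κ]
    (X : Matrix (Fin n) κ ℝ) (y : Fin n → ℝ) (lam : ℝ) (hlam : 0 ≤ lam)
    (β₀ : κ → ℝ) (hsol : IsLassoSolution X y lam β₀) (β : κ → ℝ) :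
    0 ≤ lform X y lam β₀ β := by
  set Q := ∑ i, (X.mulVec β i - X.mulVec β₀ i) ^ 2 with hQ
  have hQ0 : 0 ≤ Q := Finset.sum_nonneg fun i _ => sq_nonneg _
  set L := lform X y lam β₀ β with hL
  by_contra hneg
  push_neg at hneg
  set t : ℝ := min 1 (-L / (Q + 1)) with ht
  have htpos : 0 < t := by
    apply lt_min one_pos
    apply div_pos (by linarith) (by linarith)
  have ht1 : t ≤ 1 := min_le_left _ _
  have htQ : t ≤ -L / (Q + 1) := min_le_right _ _
  set βt : κ → ℝ := fun k => β₀ k + t * (β k - β₀ k) with hβt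
  have hmv : ∀ i, X.mulVec βt i - X.mulVec β₀ i = t * (X.mulVec β i - X.mulVec β₀ i) := by
    intro i
    rw [mulVec_sub_eq, mulVec_sub_eq, Finset.mul_sum]
    exact Finset.sum_congr rfl fun k _ => by simp [hβt]; ring
  have hkey := lasso_identity X y lam β₀ βt
  have hle := hsol βt
  have hform : lform X y lam β₀ βt ≤ t * L := by
    rw [hL, lform, lform]
    have h1 : ∑ k, lgrad X y β₀ k * (βt k - β₀ k) = t * ∑ k, lgrad X y β₀ k * (β k - β₀ k) := by
      rw [Finset.mul_sum]
      exact Finset.sum_congr rfl fun k _ => by simp [hβt]; ring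
    have h2 : (∑ k, |βt k|) ≤ (1 - t) * ∑ k, |β₀ k| + t * ∑ k, |β k| := by
      rw [Finset.mul_sum, Finset.mul_sum, ← Finset.sum_add_distrib]
      refine Finset.sum_le_sum fun k _ => ?_
      have he : βt k = (1 - t) * β₀ k + t * β k := by simp [hβt]; ring
      rw [he]
      calc |(1 - t) * β₀ k + t * β k| ≤ |(1 - t) * β₀ k| + |t * β k| := abs_add_le _ _
        _ = (1 - t) * |β₀ k| + t * |β k| := by
            rw [abs_mul, abs_mul, abs_of_nonneg (by linarith : (0:ℝ) ≤ 1 - t),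
              abs_of_nonneg htpos.le]
    rw [h1]
    nlinarith [h2]
  have hQt : ∑ i, (X.mulVec βt i - X.mulVec β₀ i) ^ 2 = t^2 * Q := by
    rw [hQ, Finset.mul_sum]
    exact Finset.sum_congr rfl fun i _ => by rw [hmv i]; ring
  have h0 : 0 ≤ (1/2) * (t^2 * Q) + t * L := by
    rw [hkey, hQt] at hle; linarith [hform]
  have hcon : t * (Q + 1) ≤ -L := by
    rw [div_eq_mul_inv] at htQ
    calc t * (Q+1) ≤ (-L * (Q+1)⁻¹) * (Q+1) := by nlinarith
      _ = -L := by field_simp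
  nlinarith

lemma fit_unique {n : ℕ} {κ : Type*} [Fintype κ]
    (X : Matrix (Fin n) κ ℝ) (y : Fin n → ℝ) (lam : ℝ) (hlam : 0 ≤ lam)
    (β₁ β₂ : κ → ℝ) (h₁ : IsLassoSolution X y lam β₁) (h₂ : IsLassoSolution X y lam β₂) :
    X.mulVec β₁ = X.mulVec β₂ := by
  have heq : lassoObj X y lam β₂ = lassoObj X y lam β₁ :=
    le_antisymm (h₂ β₁) (h₁ β₂)
  have hid := lasso_identity X y lam β₁ β₂
  have hf := lform_nonneg_of_solution X y lam hlam β₁ h₁ β₂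
  have hQ : ∑ i, (X.mulVec β₂ i - X.mulVec β₁ i) ^ 2 ≤ 0 := by linarith
  have hQ0 : ∑ i, (X.mulVec β₂ i - X.mulVec β₁ i) ^ 2 = 0 :=
    le_antisymm hQ (Finset.sum_nonneg fun i _ => sq_nonneg _)
  funext i
  have hz := (Finset.sum_eq_zero_iff_of_nonneg (fun i _ => sq_nonneg _)).mp hQ0 i
    (Finset.mem_univ i)
  have := sq_eq_zero_iff.mp hz
  linarith

lemma sum_split_ne {p : ℕ} (j : Fin p) (f : Fin p → ℝ) :
    ∑ k, f k = f j + ∑ k : {k : Fin p // k ≠ j}, f k.1 := by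
  rw [← Finset.add_sum_erase _ f (Finset.mem_univ j)]
  congr 1
  exact Finset.sum_subtype _ (fun x => by simp) f

set_option maxHeartbeats 1600000 in
/-- Along the line `z ↦ ν + z·c_j`, the unique lasso solution has `β̂(z)_j = 0` iff
`a_j ≤ z ≤ b_j`, where `a_j, b_j` are computed from a solution of the reduced lasso
problem; equivalently, `{z : j ∈ M̂(z)} = (−∞, a_j) ∪ (b_j, ∞)`. -/
theorem lasso_variable_inclusion_truncation {n p : ℕ}
    (X : Matrix (Fin n) (Fin p) ℝ) (lam : ℝ) (hlam : 0 < lam)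
    (hinv : IsUnit (X.transpose * X)) (j : Fin p)
    (η : Fin n → ℝ)
    (hη : η = X.mulVec ((X.transpose * X)⁻¹.mulVec (Pi.single j 1)))
    (c : Fin n → ℝ) (hc : c = (∑ i, η i ^ 2)⁻¹ • η)
    (ν : Fin n → ℝ)
    (βred : {k : Fin p // k ≠ j} → ℝ)
    (hred : IsLassoSolution (Matrix.of fun i (k : {k : Fin p // k ≠ j}) => X i k.1)
      ν lam βred)
    (r : Fin n → ℝ)
    (hr : r = (Matrix.of fun i (k : {k : Fin p // k ≠ j}) => X i k.1).mulVec βred - ν)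
    (a b : ℝ)
    (ha : a = (∑ i, η i ^ 2) * ((∑ i, X i j * r i) - lam))
    (hb : b = (∑ i, η i ^ 2) * ((∑ i, X i j * r i) + lam))
    (βhat : ℝ → Fin p → ℝ)
    (hβhat : ∀ z : ℝ, IsLassoSolution X (ν + z • c) lam (βhat z) ∧
      ∀ β : Fin p → ℝ, IsLassoSolution X (ν + z • c) lam β → β = βhat z) :
    (∀ z : ℝ, βhat z j = 0 ↔ a ≤ z ∧ z ≤ b) ∧
    {z : ℝ | βhat z j ≠ 0} = Set.Iio a ∪ Set.Ioi b := by
  set Xr : Matrix (Fin n) {k : Fin p // k ≠ j} ℝ :=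
    Matrix.of fun i (k : {k : Fin p // k ≠ j}) => X i k.1 with hXr
  set s : ℝ := ∑ i, η i ^ 2 with hs_def
  -- Xᵀ η = e_j
  have hdet : IsUnit (X.transpose * X).det := (Matrix.isUnit_iff_isUnit_det _).mp hinv
  have hXtη : ∀ k, (∑ i, X i k * η i) = if k = j then (1:ℝ) else 0 := by
    intro k
    have h1 : X.transpose.mulVec η = Pi.single j 1 := by
      rw [hη, Matrix.mulVec_mulVec, Matrix.mulVec_mulVec,
        Matrix.mul_nonsing_inv _ hdet, Matrix.one_mulVec]
    have h2 := congrFun h1 k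
    simpa [Matrix.mulVec, dotProduct, Matrix.transpose_apply,
      Pi.single_apply] using h2
  have hXjη : (∑ i, X i j * η i) = 1 := by simpa using hXtη j
  have hs : 0 < s := by
    rcases (Finset.sum_nonneg fun i (_ : i ∈ Finset.univ) => sq_nonneg (η i)).lt_or_eq
      with h | h
    · exact h
    · exfalso
      have hz : ∀ i ∈ Finset.univ, η i ^ 2 = 0 :=
        (Finset.sum_eq_zero_iff_of_nonneg (fun i _ => sq_nonneg _)).mp h.symm
      have : (∑ i, X i j * η i) = 0 := by
        refine Finset.sum_eq_zero fun i _ => ?_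
        have := sq_eq_zero_iff.mp (hz i (Finset.mem_univ i))
        rw [this, mul_zero]
      rw [hXjη] at this; norm_num at this
  have hXtc : ∀ k, (∑ i, X i k * c i) = if k = j then s⁻¹ else 0 := by
    intro k
    have h1 : (∑ i, X i k * c i) = s⁻¹ * ∑ i, X i k * η i := by
      rw [Finset.mul_sum, hc]
      exact Finset.sum_congr rfl fun i _ => by
        simp [hs_def, smul_eq_mul]; ring
    rw [h1, hXtη]
    split <;> simp
  -- the extension of a reduced vector by 0 at j
  have hψ_mv : ∀ (ψ : Fin p → ℝ), ψ j = 0 →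
      X.mulVec ψ = Xr.mulVec (fun k => ψ k.1) := by
    intro ψ hψ
    funext i
    have := sum_split_ne j (fun k => X i k * ψ k)
    simp only [Matrix.mulVec, dotProduct, hXr, Matrix.of_apply]
    rw [this, hψ, mul_zero, zero_add]
  have hψ_l1 : ∀ (ψ : Fin p → ℝ), ψ j = 0 →
      (∑ k, |ψ k|) = ∑ k : {k : Fin p // k ≠ j}, |ψ k.1| := by
    intro ψ hψ
    rw [sum_split_ne j (fun k => |ψ k|), hψ, abs_zero, zero_add]
  -- response shift for the reduced problem
  have hcXr : ∀ (g : {k : Fin p // k ≠ j} → ℝ), (∑ i, c i * Xr.mulVec g i) = 0 := by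
    intro g
    have h1 : (∑ i, c i * Xr.mulVec g i)
        = ∑ k : {k : Fin p // k ≠ j}, (∑ i, X i k.1 * c i) * g k := by
      simp only [Matrix.mulVec, dotProduct, hXr, Matrix.of_apply, Finset.mul_sum]
      rw [Finset.sum_comm]
      refine Finset.sum_congr rfl fun k _ => ?_
      rw [Finset.sum_mul]
      exact Finset.sum_congr rfl fun i _ => by ring
    rw [h1]
    refine Finset.sum_eq_zero fun k _ => ?_
    rw [hXtc k.1, if_neg k.2, zero_mul]
  have hshift : ∀ (z : ℝ) (g : {k : Fin p // k ≠ j} → ℝ),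
      lassoObj Xr (ν + z • c) lam g
        = lassoObj Xr ν lam g + (z * ∑ i, c i * ν i) + z^2 / 2 * ∑ i, c i ^ 2 := by
    intro z g
    simp only [lassoObj]
    have h1 : ∀ i, ((ν + z • c) i - Xr.mulVec g i) ^ 2
        = (ν i - Xr.mulVec g i) ^ 2 + 2 * z * (c i * ν i) - 2 * z * (c i * Xr.mulVec g i)
          + z ^ 2 * c i ^ 2 := by
      intro i
      simp only [Pi.add_apply, Pi.smul_apply, smul_eq_mul]
      ring
    rw [Finset.sum_congr rfl fun i _ => h1 i]
    simp only [Finset.sum_add_distrib, Finset.sum_sub_distrib, ← Finset.mul_sum, hcXr g]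
    ring
  have hshift_sol : ∀ (z : ℝ) (g : {k : Fin p // k ≠ j} → ℝ),
      IsLassoSolution Xr (ν + z • c) lam g ↔ IsLassoSolution Xr ν lam g := by
    intro z g
    constructor <;> intro h β <;> have h2 := h β
    · rw [hshift z g, hshift z β] at h2; linarith
    · rw [hshift z g, hshift z β]; linarith
  -- the reduced gradient at βred
  have hgrad_red : ∀ k : {k : Fin p // k ≠ j},
      lgrad Xr ν βred k = ∑ i, X i k.1 * r i := by
    intro k
    rw [lgrad]
    refine Finset.sum_congr rfl fun i _ => ?_
    rw [hr]
    simp [hXr]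
  -- main iff
  have hmain : ∀ z : ℝ, βhat z j = 0 ↔ a ≤ z ∧ z ≤ b := by
    intro z
    constructor
    · -- forward direction
      intro hz0
      set βm : {k : Fin p // k ≠ j} → ℝ := fun k => βhat z k.1 with hβm
      have hmv : X.mulVec (βhat z) = Xr.mulVec βm := hψ_mv (βhat z) hz0
      have hl1 : (∑ k, |βhat z k|) = ∑ k : {k : Fin p // k ≠ j}, |βm k| :=
        hψ_l1 (βhat z) hz0
      have hobj : ∀ y : Fin n → ℝ, lassoObj Xr y lam βm = lassoObj X y lam (βhat z) := by
        intro y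
        simp only [lassoObj, hmv, hl1]
      have hredm : IsLassoSolution Xr (ν + z • c) lam βm := by
        intro g
        set ψ : Fin p → ℝ := fun k => if h : k = j then 0 else g ⟨k, h⟩ with hψdef
        have hψj : ψ j = 0 := by simp [hψdef]
        have hgψ : (fun k : {k : Fin p // k ≠ j} => ψ k.1) = g := by
          funext k
          simp only [hψdef, dif_neg k.2]
        have hobjg : lassoObj Xr (ν + z • c) lam g = lassoObj X (ν + z • c) lam ψ := by
          have h5 : (∑ k, |ψ k|) = ∑ k : {k : Fin p // k ≠ j}, |g k| := by
            rw [hψ_l1 ψ hψj]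
            exact Finset.sum_congr rfl fun k _ => by rw [congrFun hgψ k]
          simp only [lassoObj, hψ_mv ψ hψj, hgψ, h5]
        rw [hobj, hobjg]
        exact (hβhat z).1 ψ
      have hredm' : IsLassoSolution Xr ν lam βm := (hshift_sol z βm).mp hredm
      have hfit : Xr.mulVec βm = Xr.mulVec βred :=
        fit_unique Xr ν lam hlam.le βm βred hredm' hred
      -- subgradient condition at j
      have hgj : lgrad X (ν + z • c) (βhat z) j = (∑ i, X i j * r i) - z * s⁻¹ := by
        rw [lgrad]
        have h1 : ∀ i, X i j * (X.mulVec (βhat z) i - (ν + z • c) i)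
            = X i j * r i - z * (X i j * c i) := by
          intro i
          have h2 : X.mulVec (βhat z) i = Xr.mulVec βred i := by rw [hmv, hfit]
          have h3 : r i = Xr.mulVec βred i - ν i := by rw [hr]; rfl
          simp only [h2, Pi.add_apply, Pi.smul_apply, smul_eq_mul, h3]
          ring
        rw [Finset.sum_congr rfl fun i _ => h1 i, Finset.sum_sub_distrib, ← Finset.mul_sum,
          hXtc j, if_pos rfl]
      have habs : |(∑ i, X i j * r i) - z * s⁻¹| ≤ lam := by
        rw [abs_le]
        constructor
        · -- use β = βhat z + single j (1:ℝ)
          have h := lform_nonneg_of_solution X (ν + z • c) lam hlam.le (βhat z)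
            (hβhat z).1 (fun k => βhat z k + (Pi.single j (1:ℝ) : Fin p → ℝ) k)
          rw [lform] at h
          have h1 : (∑ k, lgrad X (ν + z • c) (βhat z) k *
              ((βhat z k + (Pi.single j (1:ℝ) : Fin p → ℝ) k) - βhat z k))
              = lgrad X (ν + z • c) (βhat z) j := by
            rw [Finset.sum_eq_single j]
            · simp
            · intro k _ hk; simp [Pi.single_apply, hk]
            · intro h; exact absurd (Finset.mem_univ j) h
          have h2 : (∑ k, |βhat z k + (Pi.single j (1:ℝ) : Fin p → ℝ) k|) = (∑ k, |βhat z k|) + 1 := by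
            rw [sum_split_ne j (fun k => |βhat z k + (Pi.single j (1:ℝ) : Fin p → ℝ) k|),
              sum_split_ne j (fun k => |βhat z k|)]
            have h3 : ∀ k : {k : Fin p // k ≠ j},
                |βhat z k.1 + (Pi.single j (1:ℝ) : Fin p → ℝ) k.1| = |βhat z k.1| := by
              intro k; simp [Pi.single_apply, k.2]
            rw [Finset.sum_congr rfl fun k _ => h3 k]
            simp [hz0, add_comm]
          rw [h1, h2, hgj] at h
          have : lam * ((∑ k, |βhat z k|) + 1 - ∑ k, |βhat z k|) = lam := by ring
          rw [this] at h
          linarith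
        · -- use β = βhat z + single j 1
          have h := lform_nonneg_of_solution X (ν + z • c) lam hlam.le (βhat z)
            (hβhat z).1 (fun k => βhat z k + (Pi.single j (-1) : Fin p → ℝ) k)
          rw [lform] at h
          have h1 : (∑ k, lgrad X (ν + z • c) (βhat z) k *
              ((βhat z k + (Pi.single j (-1) : Fin p → ℝ) k) - βhat z k))
              = -(lgrad X (ν + z • c) (βhat z) j) := by
            rw [Finset.sum_eq_single j]
            · simp
            · intro k _ hk; simp [Pi.single_apply, hk]
            · intro h; exact absurd (Finset.mem_univ j) h
          have h2 : (∑ k, |βhat z k + (Pi.single j (-1) : Fin p → ℝ) k|) = (∑ k, |βhat z k|) + 1 := by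
            rw [sum_split_ne j (fun k => |βhat z k + (Pi.single j (-1) : Fin p → ℝ) k|),
              sum_split_ne j (fun k => |βhat z k|)]
            have h3 : ∀ k : {k : Fin p // k ≠ j},
                |βhat z k.1 + (Pi.single j (-1) : Fin p → ℝ) k.1| = |βhat z k.1| := by
              intro k; simp [Pi.single_apply, k.2]
            rw [Finset.sum_congr rfl fun k _ => h3 k]
            simp [hz0, add_comm]
          rw [h1, h2, hgj] at h
          have : lam * ((∑ k, |βhat z k|) + 1 - ∑ k, |βhat z k|) = lam := by ring
          rw [this] at h
          linarith
      rw [abs_le] at habs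
      have hmul : ∀ w : ℝ, s * (w - z * s⁻¹) = s * w - z := by
        intro w
        have h := mul_inv_cancel₀ hs.ne'
        linear_combination (-z) * h
      constructor
      · rw [ha]
        have h6 := mul_le_mul_of_nonneg_left habs.2 hs.le
        rw [hmul] at h6
        nlinarith
      · rw [hb]
        have h6 := mul_le_mul_of_nonneg_left habs.1 hs.le
        rw [hmul] at h6
        nlinarith
    · -- backward direction
      rintro ⟨haz, hzb⟩
      set βfull : Fin p → ℝ := fun k => if h : k = j then 0 else βred ⟨k, h⟩ with hβfull
      have hβfj : βfull j = 0 := by simp [hβfull]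
      have hfun : (fun k : {k : Fin p // k ≠ j} => βfull k.1) = βred := by
        funext k
        simp only [hβfull, dif_neg k.2]
      have hmv : X.mulVec βfull = Xr.mulVec βred := by
        rw [hψ_mv βfull hβfj, hfun]
      have hgrad : ∀ k, lgrad X (ν + z • c) βfull k
          = (∑ i, X i k * r i) - z * (if k = j then s⁻¹ else 0) := by
        intro k
        rw [lgrad]
        have h1 : ∀ i, X i k * (X.mulVec βfull i - (ν + z • c) i)
            = X i k * r i - z * (X i k * c i) := by
          intro i
          have h3 : r i = Xr.mulVec βred i - ν i := by rw [hr]; rfl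
          simp only [hmv, Pi.add_apply, Pi.smul_apply, smul_eq_mul, h3]
          ring
        rw [Finset.sum_congr rfl fun i _ => h1 i, Finset.sum_sub_distrib, ← Finset.mul_sum,
          hXtc k]
      have hsol : IsLassoSolution X (ν + z • c) lam βfull := by
        apply solution_of_lform
        intro β
        rw [lform]
        -- split the sums at j
        have h1 : (∑ k, lgrad X (ν + z • c) βfull k * (β k - βfull k))
            = ((∑ i, X i j * r i) - z * s⁻¹) * β j
              + ∑ k : {k : Fin p // k ≠ j}, lgrad Xr ν βred k * (β k.1 - βred k) := by
          rw [sum_split_ne j (fun k => lgrad X (ν + z • c) βfull k * (β k - βfull k))]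
          congr 1
          · rw [hgrad j, if_pos rfl, hβfj, sub_zero]
          · refine Finset.sum_congr rfl fun k _ => ?_
            rw [hgrad k.1, if_neg k.2, mul_zero, sub_zero, hgrad_red k]
            congr 2
            simp only [hβfull, dif_neg k.2]
        have h2 : (∑ k, |β k|) = |β j| + ∑ k : {k : Fin p // k ≠ j}, |β k.1| :=
          sum_split_ne j (fun k => |β k|)
        have h3 : (∑ k, |βfull k|) = ∑ k : {k : Fin p // k ≠ j}, |βred k| := by
          rw [hψ_l1 βfull hβfj]
          exact Finset.sum_congr rfl fun k _ => congrArg abs (congrFun hfun k)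
        rw [h1, h2, h3]
        have hredform := lform_nonneg_of_solution Xr ν lam hlam.le βred hred
          (fun k => β k.1)
        rw [lform] at hredform
        have habs : |(∑ i, X i j * r i) - z * s⁻¹| ≤ lam := by
          rw [abs_le]
          have h7 : ∀ w : ℝ, s⁻¹ * (s * w) = w := by
            intro w
            have h := mul_inv_cancel₀ hs.ne'
            linear_combination w * h
          rw [ha] at haz; rw [hb] at hzb
          have h8 := mul_le_mul_of_nonneg_left haz (inv_nonneg.mpr hs.le)
          have h9 := mul_le_mul_of_nonneg_left hzb (inv_nonneg.mpr hs.le)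
          rw [h7] at h8 h9
          constructor <;> nlinarith
        have hj : 0 ≤ ((∑ i, X i j * r i) - z * s⁻¹) * β j + lam * |β j| := by
          have h4 : -( ((∑ i, X i j * r i) - z * s⁻¹) * β j) ≤ lam * |β j| := by
            calc -(((∑ i, X i j * r i) - z * s⁻¹) * β j)
                ≤ |((∑ i, X i j * r i) - z * s⁻¹) * β j| := neg_le_abs _
              _ = |(∑ i, X i j * r i) - z * s⁻¹| * |β j| := abs_mul _ _
              _ ≤ lam * |β j| := by
                  exact mul_le_mul_of_nonneg_right habs (abs_nonneg _)
          linarith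
        nlinarith [hredform, hj]
      have h10 := (hβhat z).2 βfull hsol
      exact (congrFun h10 j).symm.trans hβfj
  refine ⟨hmain, ?_⟩
  ext z
  simp only [Set.mem_setOf_eq, Set.mem_union, Set.mem_Iio, Set.mem_Ioi, ne_eq]
  rw [hmain z]
  constructor
  · intro h
    by_contra hcon
    push_neg at hcon
    exact h hcon
  · rintro (h | h) ⟨h1, h2⟩ <;> linarith
end

section
/- Let μ ∈ ℝ, σ > 0 and c < d. Define the truncated-Gaussian CDF F(x) = (Φ((x−μ)/σ) − Φ((c−μ)/σ)) / (Φ((d−μ)/σ) − Φ((c−μ)/σ)). Then the pushforward under F of the conditional measure (gaussianReal μ σ²)[·| [c,d]] equals the Lebesgue measure restricted to [0,1]; that is, if Z has the N(μ,σ²) distribution truncated to [c,d], then F(Z) is uniformly distributed on [0,1]. -/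
/-!
The normal CDF `G(x) = Φ((x - μ)/σ)` of `N(μ, σ²)` is continuous and strictly increasing, and the
Gaussian measure of `[c, x]` is `G x - G c`. Hence `F = (G - G c)/(G d - G c)` is the CDF of the
truncated law on `[c, d]`, continuous and strictly increasing from `F c = 0` to `F d = 1`. For such
a CDF every level `t ∈ [0, 1]` is attained exactly once, at some `s`, so `{F ≤ t} = (-∞, s]` has
probability `F s = t`: this is the probability integral transform.
-/

open MeasureTheory ProbabilityTheory

/-- The standard normal CDF `Φ`. -/
noncomputable def stdNormalCDF (t : ℝ) : ℝ := ((gaussianReal 0 1) (Set.Iic t)).toReal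

open Set

lemma volume_restrict_Icc_zero_one_Iic (t : ℝ) :
    volume.restrict (Icc (0 : ℝ) 1) (Iic t) = ENNReal.ofReal (min t 1) := by
  have : Iic t ∩ Icc 0 1 = Icc 0 (min t 1) := by
    ext x; simp only [mem_inter_iff, mem_Iic, mem_Icc, le_min_iff]; tauto
  rw [Measure.restrict_apply measurableSet_Iic, this, Real.volume_Icc, sub_zero]

lemma map_eq_volume_restrict_Icc_of_measure_Iic {ν : Measure ℝ} [IsProbabilityMeasure ν]
    {F : ℝ → ℝ} {c d : ℝ} (hFcont : ContinuousOn F (Icc c d)) (hFmono : StrictMono F)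
    (hcd : c ≤ d) (hFc : F c = 0) (hFd : F d = 1)
    (hν : ∀ x ∈ Icc c d, ν (Iic x) = ENNReal.ofReal (F x)) :
    ν.map F = volume.restrict (Icc 0 1) := by
  have hFmeas : Measurable F := hFmono.monotone.measurable
  have : IsProbabilityMeasure (ν.map F) := Measure.isProbabilityMeasure_map hFmeas.aemeasurable
  refine Measure.ext_of_Iic _ _ fun t => ?_
  rw [Measure.map_apply hFmeas measurableSet_Iic, volume_restrict_Icc_zero_one_Iic]
  rcases lt_or_ge t 0 with ht0 | ht0
  · have hsub : F ⁻¹' Iic t ⊆ Iic c := fun x hx =>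
      hFmono.le_iff_le.mp (by simp only [mem_preimage, mem_Iic] at hx; linarith)
    rw [ENNReal.ofReal_of_nonpos (by linarith [min_le_left t 1])]
    exact measure_mono_null hsub (by rw [hν c ⟨le_rfl, hcd⟩, hFc, ENNReal.ofReal_zero])
  rcases le_or_gt 1 t with ht1 | ht1
  · have hsub : Iic d ⊆ F ⁻¹' Iic t := fun x hx =>
      (hFmono.monotone hx).trans (hFd ▸ ht1)
    rw [min_eq_right ht1, ENNReal.ofReal_one]
    refine le_antisymm prob_le_one ?_
    calc 1 = ν (Iic d) := by rw [hν d ⟨hcd, le_rfl⟩, hFd, ENNReal.ofReal_one]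
      _ ≤ ν (F ⁻¹' Iic t) := measure_mono hsub
  · obtain ⟨s, hs, hFs⟩ := intermediate_value_Icc hcd hFcont
      (⟨hFc ▸ ht0, hFd ▸ ht1.le⟩ : t ∈ Icc (F c) (F d))
    have hpre : F ⁻¹' Iic t = Iic s := by
      ext x; simp only [mem_preimage, mem_Iic, ← hFs, hFmono.le_iff_le]
    rw [hpre, hν s hs, hFs, min_eq_left ht1.le]

lemma map_cond_Icc_eq_volume_restrict_Icc {P : Measure ℝ} {G : ℝ → ℝ} {c d : ℝ}
    (hGcont : ContinuousOn G (Icc c d)) (hGmono : StrictMono G) (hcd : c < d)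
    (hP : ∀ x ∈ Icc c d, P (Icc c x) = ENNReal.ofReal (G x - G c)) :
    (P[|Icc c d]).map (fun x => (G x - G c) / (G d - G c)) = volume.restrict (Icc 0 1) := by
  have hΔ : 0 < G d - G c := sub_pos.mpr (hGmono hcd)
  have hPcd : P (Icc c d) = ENNReal.ofReal (G d - G c) := hP d ⟨hcd.le, le_rfl⟩
  have : IsProbabilityMeasure (P[|Icc c d]) := cond_isProbabilityMeasure_of_finite
    (by rw [hPcd]; exact ENNReal.ofReal_pos.mpr hΔ |>.ne') (by rw [hPcd]; exact ENNReal.ofReal_ne_top)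
  refine map_eq_volume_restrict_Icc_of_measure_Iic ((hGcont.sub continuousOn_const).div_const _)
    (fun a b hab => div_lt_div_of_pos_right (sub_lt_sub_right (hGmono hab) _) hΔ) hcd.le
    (by rw [sub_self, zero_div]) (div_self hΔ.ne') fun x hx => ?_
  have hcx : Icc c d ∩ Iic x = Icc c x := by
    rw [← Ici_inter_Iic, ← Ici_inter_Iic, inter_assoc, Iic_inter_Iic, min_eq_right hx.2]
  rw [cond_apply measurableSet_Icc, hcx, hP x hx, hPcd, ENNReal.ofReal_div_of_pos hΔ,
    ENNReal.div_eq_inv_mul]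

lemma stdNormalCDF_eq_integral (t : ℝ) :
    stdNormalCDF t = ∫ x in Iic t, gaussianPDFReal 0 1 x := by
  rw [stdNormalCDF, gaussianReal_apply_eq_integral 0 one_ne_zero, ENNReal.toReal_ofReal]
  exact setIntegral_nonneg measurableSet_Iic fun x _ => gaussianPDFReal_nonneg 0 1 x

lemma stdNormalCDF_sub_eq_integral (a b : ℝ) :
    stdNormalCDF b - stdNormalCDF a = ∫ x in a..b, gaussianPDFReal 0 1 x := by
  rw [stdNormalCDF_eq_integral, stdNormalCDF_eq_integral]
  exact intervalIntegral.integral_Iic_sub_Iic (integrable_gaussianPDFReal 0 1).integrableOn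
    (integrable_gaussianPDFReal 0 1).integrableOn

lemma continuous_stdNormalCDF : Continuous stdNormalCDF := by
  have h : stdNormalCDF = fun t => stdNormalCDF 0 + ∫ x in (0 : ℝ)..t, gaussianPDFReal 0 1 x := by
    funext t
    rw [← stdNormalCDF_sub_eq_integral, add_sub_cancel]
  rw [h]
  exact continuous_const.add ((integrable_gaussianPDFReal 0 1).continuous_primitive 0)

lemma strictMono_stdNormalCDF : StrictMono stdNormalCDF := fun a b hab => by
  have := intervalIntegral.intervalIntegral_pos_of_pos
    (integrable_gaussianPDFReal 0 1).intervalIntegrable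
    (fun x => gaussianPDFReal_pos 0 1 x one_ne_zero) hab
  rw [← stdNormalCDF_sub_eq_integral] at this
  linarith

lemma gaussianReal_map_standardize {μ σ : ℝ} (hσ : σ ≠ 0) :
    (gaussianReal μ (σ ^ 2).toNNReal).map (fun x => (x - μ) / σ) = gaussianReal 0 1 := by
  have hcomp : (fun x => (x - μ) / σ) = (· / σ) ∘ (· - μ) := rfl
  rw [hcomp, ← Measure.map_map (measurable_div_const σ) (measurable_sub_const μ),
    gaussianReal_map_sub_const, gaussianReal_map_div_const, sub_self, zero_div]
  congr 1
  ext
  simp [max_eq_left (sq_nonneg σ), hσ]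

lemma gaussianReal_Icc {μ σ a b : ℝ} (hσ : 0 < σ) (hab : a ≤ b) :
    gaussianReal μ (σ ^ 2).toNNReal (Icc a b)
      = ENNReal.ofReal (stdNormalCDF ((b - μ) / σ) - stdNormalCDF ((a - μ) / σ)) := by
  have hpre : (fun x => (x - μ) / σ) ⁻¹' Icc ((a - μ) / σ) ((b - μ) / σ) = Icc a b := by
    ext x; simp [div_le_div_iff_of_pos_right hσ]
  rw [← hpre, ← Measure.map_apply (by fun_prop) measurableSet_Icc,
    gaussianReal_map_standardize hσ.ne', gaussianReal_apply_eq_integral 0 one_ne_zero,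
    ← setIntegral_congr_set Ioc_ae_eq_Icc, ← intervalIntegral.integral_of_le (by gcongr),
    stdNormalCDF_sub_eq_integral]

/-- The truncated-Gaussian CDF transform: if `Z ~ N(μ,σ²)` truncated to `[c,d]` and
`F(x) = (Φ((x−μ)/σ) − Φ((c−μ)/σ))/(Φ((d−μ)/σ) − Φ((c−μ)/σ))`, then `F(Z) ~ U(0,1)`. -/
theorem truncated_gaussian_cdf_uniform (μ σ c d : ℝ) (hσ : 0 < σ) (hcd : c < d)
    (F : ℝ → ℝ)
    (hF : F = fun x =>
      (stdNormalCDF ((x - μ) / σ) - stdNormalCDF ((c - μ) / σ)) /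
      (stdNormalCDF ((d - μ) / σ) - stdNormalCDF ((c - μ) / σ))) :
    Measure.map F ((gaussianReal μ (σ ^ 2).toNNReal)[|Set.Icc c d])
      = volume.restrict (Set.Icc (0 : ℝ) 1) := by
  subst hF
  refine map_cond_Icc_eq_volume_restrict_Icc (G := fun x => stdNormalCDF ((x - μ) / σ))
    ?_ ?_ hcd fun x hx => gaussianReal_Icc hσ hx.1
  · exact (continuous_stdNormalCDF.comp (by fun_prop)).continuousOn
  · exact strictMono_stdNormalCDF.comp fun a b hab =>
      div_lt_div_of_pos_right (sub_lt_sub_right hab μ) hσ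
end

section
/- Let ι be a finite index type, M a finite set of indices, H ⊆ M, ξ > 0, and A, B : ι → ℝ with A_k ≠ 0 for all k ∈ M. For k ∈ M set c_k = (−sign(A_k)·B_k − ξ)/|A_k| and d_k = (−sign(A_k)·B_k + ξ)/|A_k|. Then {z ∈ ℝ : |z·A_k + B_k| > ξ for all k ∈ H, and |z·A_k + B_k| < ξ for all k ∈ M \ H} = (⋂_{k∈H} ((−∞, c_k) ∪ (d_k, ∞))) ∩ (⋂_{k∈M\H} (c_k, d_k)), and moreover there exists a finite family I_1, …, I_m of order-connected subsets of ℝ (intervals) whose union equals this set. -/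
private lemma aux1 (a b ξ z : ℝ) (ha : a ≠ 0) :
    ξ < |z * a + b| ↔
      z < (-(Real.sign a) * b - ξ) / |a| ∨ (-(Real.sign a) * b + ξ) / |a| < z := by
  rcases ha.lt_or_gt with h | h
  · rw [Real.sign_of_neg h, abs_of_neg h, lt_abs, lt_div_iff₀ (by linarith),
      div_lt_iff₀ (by linarith)]
    constructor <;> rintro (h1 | h1) <;> first | (left; nlinarith) | (right; nlinarith)
  · rw [Real.sign_of_pos h, abs_of_pos h, lt_abs, lt_div_iff₀ h, div_lt_iff₀ h]
    constructor <;> rintro (h1 | h1) <;> first | (left; nlinarith) | (right; nlinarith)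

private lemma aux2 (a b ξ z : ℝ) (ha : a ≠ 0) :
    |z * a + b| < ξ ↔
      (-(Real.sign a) * b - ξ) / |a| < z ∧ z < (-(Real.sign a) * b + ξ) / |a| := by
  rcases ha.lt_or_gt with h | h
  · rw [Real.sign_of_neg h, abs_of_neg h, abs_lt, div_lt_iff₀ (by linarith),
      lt_div_iff₀ (by linarith)]
    constructor <;> rintro ⟨h1, h2⟩ <;> constructor <;> nlinarith
  · rw [Real.sign_of_pos h, abs_of_pos h, abs_lt, div_lt_iff₀ h, lt_div_iff₀ h]
    constructor <;> rintro ⟨h1, h2⟩ <;> constructor <;> nlinarith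


/-- The stable-t event `{Ĥ(M) = H}` along a line: the set of `z` where the affine
t-statistics exceed the threshold for `k ∈ H` and fall below it for `k ∈ M \ H` equals
the displayed intersection of unions of intervals, and it is a finite union of
order-connected sets (intervals). -/
theorem stable_t_truncation_set {ι : Type*} [Fintype ι] [DecidableEq ι]
    (M H : Finset ι) (hHM : H ⊆ M) (ξ : ℝ) (hξ : 0 < ξ)
    (A B : ι → ℝ) (hA : ∀ k ∈ M, A k ≠ 0)
    (c d : ι → ℝ)
    (hc : ∀ k, c k = (-(Real.sign (A k)) * B k - ξ) / |A k|)
    (hd : ∀ k, d k = (-(Real.sign (A k)) * B k + ξ) / |A k|) :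
    {z : ℝ | (∀ k ∈ H, ξ < |z * A k + B k|) ∧ (∀ k ∈ M \ H, |z * A k + B k| < ξ)}
      = (⋂ k ∈ H, (Set.Iio (c k) ∪ Set.Ioi (d k)))
          ∩ (⋂ k ∈ M \ H, Set.Ioo (c k) (d k)) ∧
    ∃ (m : ℕ) (I : Fin m → Set ℝ), (∀ i, (I i).OrdConnected) ∧
      (⋃ i, I i) =
        {z : ℝ | (∀ k ∈ H, ξ < |z * A k + B k|) ∧
          (∀ k ∈ M \ H, |z * A k + B k| < ξ)} := by
  classical
  have h1 : {z : ℝ | (∀ k ∈ H, ξ < |z * A k + B k|) ∧ (∀ k ∈ M \ H, |z * A k + B k| < ξ)}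
      = (⋂ k ∈ H, (Set.Iio (c k) ∪ Set.Ioi (d k)))
          ∩ (⋂ k ∈ M \ H, Set.Ioo (c k) (d k)) := by
    ext z
    simp only [Set.mem_setOf_eq, Set.mem_inter_iff, Set.mem_iInter, Set.mem_union,
      Set.mem_Iio, Set.mem_Ioi, Set.mem_Ioo]
    apply and_congr
    · exact forall₂_congr fun k hk => by
        rw [hc, hd]; exact aux1 _ _ _ _ (hA k (hHM hk))
    · exact forall₂_congr fun k hk => by
        rw [hc, hd]; exact aux2 _ _ _ _ (hA k (Finset.mem_sdiff.1 hk).1)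
  refine ⟨h1, ?_⟩
  set T : Set ℝ := ⋂ k ∈ M \ H, Set.Ioo (c k) (d k) with hT
  set J : (ι → Bool) → Set ℝ := fun f =>
    T ∩ ⋂ k ∈ H, (if f k then Set.Iio (c k) else Set.Ioi (d k)) with hJ
  have hJord : ∀ f, (J f).OrdConnected := by
    intro f
    apply Set.OrdConnected.inter
    · exact Set.ordConnected_iInter fun k =>
        Set.ordConnected_iInter fun _ => Set.ordConnected_Ioo
    · refine Set.ordConnected_iInter fun k => Set.ordConnected_iInter fun _ => ?_
      split
      · exact Set.ordConnected_Iio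
      · exact Set.ordConnected_Ioi
  have hJU : (⋃ f, J f)
      = {z : ℝ | (∀ k ∈ H, ξ < |z * A k + B k|) ∧ (∀ k ∈ M \ H, |z * A k + B k| < ξ)} := by
    rw [h1]
    ext z
    simp only [hJ, hT, Set.mem_iUnion, Set.mem_inter_iff, Set.mem_iInter, Set.mem_union,
      Set.mem_Iio, Set.mem_Ioi, Set.mem_Ioo]
    constructor
    · rintro ⟨f, hz1, hz2⟩
      refine ⟨fun k hk => ?_, hz1⟩
      have h2 := hz2 k hk
      split at h2
      · exact Or.inl h2
      · exact Or.inr h2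
    · rintro ⟨hz1, hz2⟩
      refine ⟨fun k => decide (z < c k), hz2, fun k hk => ?_⟩
      rcases hz1 k hk with h | h
      · simp [h]
      · by_cases hzc : z < c k
        · simp [hzc]
        · simp [hzc, h]
  obtain ⟨e⟩ : Nonempty ((ι → Bool) ≃ Fin (Fintype.card (ι → Bool))) :=
    ⟨Fintype.equivFin _⟩
  refine ⟨Fintype.card (ι → Bool), J ∘ e.symm, fun i => hJord _, ?_⟩
  rw [← hJU]
  exact e.symm.surjective.iUnion_comp J
end

section
/- Fix λ > 0, a set of indices M ⊆ Fin p such that X_MᵀX_M is invertible (X_M being the submatrix of the columns of X indexed by M), and signs s_j ∈ {−1, +1} for j ∈ M. Given y ∈ ℝ^n, define b̂ = (X_MᵀX_M)⁻¹·(X_Mᵀy − λ·s_M) ∈ ℝ^M and let β̂ ∈ ℝ^p equal b̂ on M and 0 off M. Then β̂ is a lasso solution for (X, y, λ) with sign(β̂_j) = s_j for every j ∈ M if and only if: (i) s_j·b̂_j > 0 for every j ∈ M, and (ii) |x_jᵀ(y − X_M·b̂)| ≤ λ for every j ∉ M. -/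
/-!
Around any point `b` the lasso objective expands exactly as
`f(β) = f(b) - ⟪g, β - b⟫ + ½‖X(β - b)‖² + λ(‖β‖₁ - ‖b‖₁)` with `g = Xᵀ(y - Xb)`.
Hence `b` is a minimizer as soon as `|g_j| ≤ λ` and `g_j b_j = λ|b_j|` for all `j`; conversely,
perturbing a minimizer along the `j`-th coordinate and letting the step tend to `0` forces
`|g_j| ≤ λ`. For `β̂` built from `b̂`, the normal equations give `g_M = λ s_M` exactly. Condition (i)
is then both the sign requirement and the subgradient condition on `M`; off `M` the subgradient
condition is (ii).
-/

open scoped BigOperators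

open Matrix Filter Topology

/-- Minus the gradient of the least-squares term `½‖y − Xb‖²`. -/
noncomputable def residualCorr {m κ : Type*} [Fintype m] [Fintype κ] (X : Matrix m κ ℝ) (y : m → ℝ)
    (b : κ → ℝ) : κ → ℝ :=
  Xᵀ *ᵥ (y - X *ᵥ b)

theorem residualCorr_nonsing_inv_mulVec {m κ : Type*} [Fintype m] [Fintype κ] [DecidableEq κ]
    (A : Matrix m κ ℝ) (hA : IsUnit (Aᵀ * A)) (y : m → ℝ) (v : κ → ℝ) :
    residualCorr A y ((Aᵀ * A)⁻¹ *ᵥ (Aᵀ *ᵥ y - v)) = v := by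
  rw [residualCorr, mulVec_sub, mulVec_mulVec, mulVec_mulVec,
    mul_nonsing_inv _ ((isUnit_iff_isUnit_det _).mp hA), one_mulVec, sub_sub_cancel]

theorem mulVec_dite_mem {m κ R : Type*} [Fintype κ] [DecidableEq κ] [NonUnitalNonAssocSemiring R]
    (X : Matrix m κ R) (M : Finset κ) (b : M → R) :
    X *ᵥ (fun j => if h : j ∈ M then b ⟨j, h⟩ else 0) = (of fun i (j : M) => X i j) *ᵥ b := by
  ext i
  simp only [mulVec, dotProduct, of_apply, mul_dite, mul_zero]
  exact (Finset.sum_attach_eq_sum_dite M fun j => X i j * b j).symm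

theorem Real.sign_eq_iff_pos_mul {s x : ℝ} (hs : s = 1 ∨ s = -1) : Real.sign x = s ↔ 0 < s * x := by
  rcases lt_trichotomy x 0 with hx | rfl | hx
  · rw [Real.sign_of_neg hx]; rcases hs with rfl | rfl <;> norm_num <;> linarith
  · rcases hs with rfl | rfl <;> simp
  · rw [Real.sign_of_pos hx]; rcases hs with rfl | rfl <;> norm_num <;> linarith

theorem le_of_forall_pos_mul_le_sq_add {g a c : ℝ} (h : ∀ t > 0, g * t ≤ a * t ^ 2 + c * t) :
    g ≤ c := by
  have hlim : Tendsto (fun t => a * t + c) (𝓝[>] 0) (𝓝 c) := by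
    have hcont : Continuous fun t : ℝ => a * t + c := by fun_prop
    exact (hcont.tendsto' 0 c (by simp)).mono_left nhdsWithin_le_nhds
  refine ge_of_tendsto hlim (eventually_nhdsWithin_of_forall fun t (ht : 0 < t) => ?_)
  exact le_of_mul_le_mul_right (by linarith [h t ht]) ht

theorem abs_le_of_forall_mul_le_sq_add_abs {g a c : ℝ} (h : ∀ t, g * t ≤ a * t ^ 2 + c * |t|) :
    |g| ≤ c := by
  refine abs_le.mpr
    ⟨?_, le_of_forall_pos_mul_le_sq_add fun t ht => by simpa [abs_of_pos ht] using h t⟩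
  have := le_of_forall_pos_mul_le_sq_add (g := -g) (a := a) (c := c) fun t ht => by
    simpa [abs_of_pos ht] using h (-t)
  linarith

section Lasso

variable {n : ℕ} {κ : Type*} [Fintype κ] (X : Matrix (Fin n) κ ℝ) (y : Fin n → ℝ) (lam : ℝ)

theorem lassoObj_expand (b β : κ → ℝ) :
    lassoObj X y lam β = lassoObj X y lam b - residualCorr X y b ⬝ᵥ (β - b)
      + (1 / 2) * ∑ i, (X *ᵥ (β - b)) i ^ 2 + lam * (∑ j, |β j| - ∑ j, |b j|) := by
  have hres : ∀ i, y i - (X *ᵥ β) i = (y i - (X *ᵥ b) i) - (X *ᵥ (β - b)) i := fun i => by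
    simp only [mulVec_sub, Pi.sub_apply]; ring
  have hcorr : residualCorr X y b ⬝ᵥ (β - b) = (y - X *ᵥ b) ⬝ᵥ (X *ᵥ (β - b)) := by
    rw [residualCorr, mulVec_transpose, dotProduct_mulVec]
  have hsq : ∑ i, (y i - (X *ᵥ β) i) ^ 2 = ∑ i, (y i - (X *ᵥ b) i) ^ 2
      - 2 * (y - X *ᵥ b) ⬝ᵥ (X *ᵥ (β - b)) + ∑ i, (X *ᵥ (β - b)) i ^ 2 := by
    rw [dotProduct, Finset.mul_sum, ← Finset.sum_sub_distrib, ← Finset.sum_add_distrib]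
    exact Finset.sum_congr rfl fun i _ => by rw [hres]; simp only [Pi.sub_apply]; ring
  rw [lassoObj, lassoObj, hsq, hcorr]
  ring

variable {X y lam}

theorem isLassoSolution_of_subgradient {b : κ → ℝ} (hbound : ∀ j, |residualCorr X y b j| ≤ lam)
    (hactive : ∀ j, residualCorr X y b j * b j = lam * |b j|) :
    IsLassoSolution X y lam b := by
  intro β
  have hlin : residualCorr X y b ⬝ᵥ (β - b) ≤ lam * (∑ j, |β j| - ∑ j, |b j|) := by
    rw [dotProduct, mul_sub, Finset.mul_sum, Finset.mul_sum, ← Finset.sum_sub_distrib]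
    refine Finset.sum_le_sum fun j _ => ?_
    rw [Pi.sub_apply, mul_sub, hactive j]
    refine sub_le_sub_right ?_ _
    calc residualCorr X y b j * β j ≤ |residualCorr X y b j| * |β j| := by
          rw [← abs_mul]; exact le_abs_self _
      _ ≤ lam * |β j| := by gcongr; exact hbound j
  have hquad : 0 ≤ (1 / 2) * ∑ i, (X *ᵥ (β - b)) i ^ 2 := by positivity
  rw [lassoObj_expand X y lam b β]
  linarith

theorem IsLassoSolution.abs_residualCorr_le [DecidableEq κ] {b : κ → ℝ}
    (hb : IsLassoSolution X y lam b) (hlam : 0 ≤ lam) (j : κ) :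
    |residualCorr X y b j| ≤ lam := by
  refine abs_le_of_forall_mul_le_sq_add_abs (a := (1 / 2) * ∑ i, X i j ^ 2) fun t => ?_
  have hopt := (hb (b + Pi.single j t)).trans_eq (lassoObj_expand X y lam b _)
  have hnorm : ∑ k, |b k + (Pi.single j t : κ → ℝ) k| ≤ ∑ k, |b k| + |t| := by
    calc ∑ k, |b k + (Pi.single j t : κ → ℝ) k| ≤ ∑ k, (|b k| + |(Pi.single j t : κ → ℝ) k|) :=
          Finset.sum_le_sum fun k _ => abs_add_le _ _
      _ = ∑ k, |b k| + |t| := by simp [Finset.sum_add_distrib, Pi.single_apply, apply_ite abs]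
  have hsq : ∑ i, (X *ᵥ Pi.single j t) i ^ 2 = (∑ i, X i j ^ 2) * t ^ 2 := by
    simp [mulVec_single, mul_pow, Finset.sum_mul]
  rw [add_sub_cancel_left, dotProduct_single, hsq] at hopt
  simp only [Pi.add_apply] at hopt
  nlinarith [mul_le_mul_of_nonneg_left hnorm hlam]

theorem isLassoSolution_of_sign_pattern (hlam : 0 ≤ lam) {M : Finset κ} {s b : κ → ℝ}
    (hs : ∀ j ∈ M, s j = 1 ∨ s j = -1) (hpos : ∀ j ∈ M, 0 < s j * b j)
    (hzero : ∀ j ∉ M, b j = 0) (hactive : ∀ j ∈ M, residualCorr X y b j = lam * s j)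
    (hinactive : ∀ j ∉ M, |residualCorr X y b j| ≤ lam) :
    IsLassoSolution X y lam b := by
  have habs : ∀ j ∈ M, |s j| = 1 := fun j hj => by rcases hs j hj with h | h <;> simp [h]
  refine isLassoSolution_of_subgradient (fun j => ?_) (fun j => ?_)
  · by_cases hj : j ∈ M
    · rw [hactive j hj, abs_mul, habs j hj, abs_of_nonneg hlam, mul_one]
    · exact hinactive j hj
  · by_cases hj : j ∈ M
    · rw [hactive j hj, mul_assoc, ← abs_of_pos (hpos j hj), abs_mul, habs j hj, one_mul]
    · simp [hzero j hj]

end Lasso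

/-- Polyhedral characterization of the lasso selection event `{M̂ = M, ŝ = s}`:
with `b̂ = (X_MᵀX_M)⁻¹(X_Mᵀy − λs_M)` and `β̂` equal to `b̂` on `M` and `0` off `M`,
`β̂` is a lasso solution with signs `s` on `M` iff `s_j·b̂_j > 0` for `j ∈ M` and
`|x_jᵀ(y − X_M b̂)| ≤ λ` for `j ∉ M`. -/
theorem lasso_selection_event_polyhedral {n p : ℕ} (X : Matrix (Fin n) (Fin p) ℝ)
    (y : Fin n → ℝ) (lam : ℝ) (hlam : 0 < lam)
    (M : Finset (Fin p))
    (XM : Matrix (Fin n) {j // j ∈ M} ℝ) (hXM : XM = Matrix.of fun i j => X i j.1)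
    (hinv : IsUnit (XM.transpose * XM))
    (s : Fin p → ℝ) (hs : ∀ j ∈ M, s j = 1 ∨ s j = -1)
    (bhat : {j // j ∈ M} → ℝ)
    (hbhat : bhat = (XM.transpose * XM)⁻¹.mulVec
      (XM.transpose.mulVec y - lam • (fun j : {j // j ∈ M} => s j.1)))
    (βhat : Fin p → ℝ)
    (hβhat : βhat = fun j => if h : j ∈ M then bhat ⟨j, h⟩ else 0) :
    (IsLassoSolution X y lam βhat ∧ ∀ j (h : j ∈ M), Real.sign (βhat j) = s j) ↔
      ((∀ j : {j // j ∈ M}, 0 < s j.1 * bhat j) ∧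
       (∀ j ∉ M, |∑ i, X i j * (y i - XM.mulVec bhat i)| ≤ lam)) := by
  subst hXM
  have hfit : X *ᵥ βhat = (of fun i (j : M) => X i j) *ᵥ bhat := hβhat ▸ mulVec_dite_mem X M bhat
  have hcorr : ∀ j, residualCorr X y βhat j
      = ∑ i, X i j * (y i - ((of fun i (j : M) => X i j) *ᵥ bhat) i) := fun j => by
    rw [residualCorr, hfit]; rfl
  have hactive : ∀ j ∈ M, residualCorr X y βhat j = lam * s j := fun j hj => by
    rw [hcorr]
    exact hbhat ▸
      congrFun (residualCorr_nonsing_inv_mulVec _ hinv y (lam • fun j : M => s j)) ⟨j, hj⟩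
  have hsign : (∀ j (h : j ∈ M), Real.sign (βhat j) = s j) ↔ ∀ j ∈ M, 0 < s j * βhat j :=
    forall₂_congr fun j hj => Real.sign_eq_iff_pos_mul (hs j hj)
  have hoff : ∀ j ∉ M, βhat j = 0 := fun j hj => by simp [hβhat, hj]
  have hpos : (∀ j : M, 0 < s j * bhat j) ↔ ∀ j ∈ M, 0 < s j * βhat j :=
    Subtype.forall.trans <| forall₂_congr fun j hj => by simp [hβhat, hj]
  simp only [hsign, hpos, ← hcorr]
  exact ⟨fun ⟨hsol, hpos⟩ => ⟨hpos, fun j _ => hsol.abs_residualCorr_le hlam.le j⟩,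
    fun ⟨hpos, hinactive⟩ =>
      ⟨isLassoSolution_of_sign_pattern hlam.le hs hpos hoff hactive hinactive, hpos⟩⟩
end

section
/- Fix λ > 0, M ⊆ Fin p with X_MᵀX_M invertible, signs s_j ∈ {−1, +1} for j ∈ M, and ν, c ∈ ℝ^n. For z ∈ ℝ let y(z) = ν + z·c and b̂(z) = (X_MᵀX_M)⁻¹·(X_Mᵀ·y(z) − λ·s_M). Then the set {z ∈ ℝ : s_j·b̂(z)_j > 0 for all j ∈ M, and |x_jᵀ(y(z) − X_M·b̂(z))| ≤ λ for all j ∉ M} is order-connected (an interval). -/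
open scoped BigOperators

lemma affine_between (a b x y t : ℝ) (hx : x ≤ t) (hty : t ≤ y) :
    min (a + x * b) (a + y * b) ≤ a + t * b ∧ a + t * b ≤ max (a + x * b) (a + y * b) := by
  rcases le_total 0 b with hb | hb
  · exact ⟨le_trans (min_le_left _ _) (by nlinarith), le_trans (by nlinarith) (le_max_right _ _)⟩
  · exact ⟨le_trans (min_le_right _ _) (by nlinarith), le_trans (by nlinarith) (le_max_left _ _)⟩

/-- The lasso selection event `{M̂ = M, ŝ = s}` restricted to the line `z ↦ ν + z·c`
is a single interval: the set of `z` satisfying the polyhedral selection conditions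
is order-connected. -/
theorem lasso_selection_event_on_line_ordConnected {n p : ℕ}
    (X : Matrix (Fin n) (Fin p) ℝ) (lam : ℝ) (hlam : 0 < lam)
    (M : Finset (Fin p))
    (XM : Matrix (Fin n) {j // j ∈ M} ℝ) (hXM : XM = Matrix.of fun i j => X i j.1)
    (hinv : IsUnit (XM.transpose * XM))
    (s : Fin p → ℝ) (hs : ∀ j ∈ M, s j = 1 ∨ s j = -1)
    (ν c : Fin n → ℝ)
    (bhat : ℝ → {j // j ∈ M} → ℝ)
    (hbhat : ∀ z : ℝ, bhat z = (XM.transpose * XM)⁻¹.mulVec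
      (XM.transpose.mulVec (ν + z • c) - lam • (fun j : {j // j ∈ M} => s j.1))) :
    Set.OrdConnected {z : ℝ |
      (∀ j : {j // j ∈ M}, 0 < s j.1 * bhat z j) ∧
      (∀ j ∉ M, |∑ i, X i j * ((ν + z • c) i - XM.mulVec (bhat z) i)| ≤ lam)} := by
  set α : {j // j ∈ M} → ℝ := (XM.transpose * XM)⁻¹.mulVec
      (XM.transpose.mulVec ν - lam • (fun j : {j // j ∈ M} => s j.1)) with hα
  set β : {j // j ∈ M} → ℝ := (XM.transpose * XM)⁻¹.mulVec (XM.transpose.mulVec c) with hβ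
  have hb : ∀ z : ℝ, bhat z = α + z • β := by
    intro z
    rw [hbhat, hα, hβ]
    have h1 : XM.transpose.mulVec (ν + z • c) - lam • (fun j : {j // j ∈ M} => s j.1)
        = (XM.transpose.mulVec ν - lam • (fun j : {j // j ∈ M} => s j.1))
          + z • XM.transpose.mulVec c := by
      rw [Matrix.mulVec_add, Matrix.mulVec_smul]
      funext j; simp; ring
    rw [h1, Matrix.mulVec_add, Matrix.mulVec_smul]
  -- residual is affine
  have hr : ∀ z : ℝ, ∀ i, (ν + z • c) i - XM.mulVec (bhat z) i
      = (ν i - XM.mulVec α i) + z * (c i - XM.mulVec β i) := by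
    intro z i
    rw [hb, Matrix.mulVec_add, Matrix.mulVec_smul]
    simp [Pi.add_apply, Pi.smul_apply]
    ring
  have hg : ∀ (j : Fin p) (z : ℝ),
      (∑ i, X i j * ((ν + z • c) i - XM.mulVec (bhat z) i))
      = (∑ i, X i j * (ν i - XM.mulVec α i)) + z * (∑ i, X i j * (c i - XM.mulVec β i)) := by
    intro j z
    rw [Finset.mul_sum, ← Finset.sum_add_distrib]
    refine Finset.sum_congr rfl fun i _ => ?_
    rw [hr]
    ring
  constructor
  intro x hx y hy t ht
  obtain ⟨hx1, hx2⟩ := hx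
  obtain ⟨hy1, hy2⟩ := hy
  obtain ⟨htx, hty⟩ := ht
  constructor
  · intro j
    have hz : ∀ z : ℝ, s j.1 * bhat z j = s j.1 * α j + z * (s j.1 * β j) := by
      intro z; rw [hb]; simp [Pi.add_apply]; ring
    have h := affine_between (s j.1 * α j) (s j.1 * β j) x y t htx hty
    rw [hz]
    refine lt_of_lt_of_le ?_ h.1
    rw [lt_min_iff]
    exact ⟨by rw [← hz]; exact hx1 j, by rw [← hz]; exact hy1 j⟩
  · intro j hj
    have h := affine_between (∑ i, X i j * (ν i - XM.mulVec α i))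
      (∑ i, X i j * (c i - XM.mulVec β i)) x y t htx hty
    rw [hg, abs_le]
    have hxa := abs_le.mp ((hg j x) ▸ hx2 j hj)
    have hya := abs_le.mp ((hg j y) ▸ hy2 j hj)
    constructor
    · refine le_trans ?_ h.1
      exact le_min hxa.1 hya.1
    · exact le_trans h.2 (max_le hxa.2 hya.2)
end

section
/- Fix λ > 0 and ν, c ∈ ℝ^n, and assume that for every z ∈ ℝ the lasso problem with design X, response ν + z·c, and penalty λ has a unique solution β̂(z). Then for every M ⊆ Fin p there exist m ≤ 2^{|M|} and order-connected sets I_1, …, I_m ⊆ ℝ such that {z ∈ ℝ : the active set of β̂(z) equals M} = I_1 ∪ ⋯ ∪ I_m; that is, conditional on the selected model being exactly M, the statistic z is truncated to a union of at most 2^{|M|} intervals, one for each possible sign vector of the active coefficients. -/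
/-!
By the KKT conditions, `β` is a lasso solution for `y` exactly when the correlation
`g = Xᵀ (y - X β)` satisfies `|g_j| ≤ λ` and `g_j β_j = λ |β_j|` for every `j`. Once the sign
vector of `β` is fixed these conditions are affine in `(y, β)`, so the responses admitting a
KKT point with a prescribed sign vector form a convex set. With unique solutions along the line
`z ↦ ν + z c`, the event that the solution has a given sign vector is therefore an interval, and
the event that the active set is `M` is the union over the `2^{|M|}` sign vectors supported on `M`.
-/

open scoped BigOperators

open Matrix Set

section KKT

variable {n : ℕ} {κ : Type*} [Fintype κ]

noncomputable def lassoCorr (X : Matrix (Fin n) κ ℝ) (y : Fin n → ℝ) (β : κ → ℝ) : κ → ℝ :=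
  (y - X *ᵥ β) ᵥ* X

def IsLassoKKT (X : Matrix (Fin n) κ ℝ) (y : Fin n → ℝ) (lam : ℝ) (β : κ → ℝ) : Prop :=
  ∀ j, |lassoCorr X y β j| ≤ lam ∧ lassoCorr X y β j * β j = lam * |β j|

theorem lassoObj_add (X : Matrix (Fin n) κ ℝ) (y : Fin n → ℝ) (lam : ℝ) (β d : κ → ℝ) :
    lassoObj X y lam (β + d) = lassoObj X y lam β - lassoCorr X y β ⬝ᵥ d
      + (1 / 2) * ∑ i, (X *ᵥ d) i ^ 2 + lam * ∑ j, (|β j + d j| - |β j|) := by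
  have hres : ∀ i, (y i - (X *ᵥ (β + d)) i) ^ 2
      = (y - X *ᵥ β) i ^ 2 - 2 * ((y - X *ᵥ β) i * (X *ᵥ d) i) + (X *ᵥ d) i ^ 2 := fun i => by
    simp only [mulVec_add, Pi.add_apply, Pi.sub_apply]; ring
  rw [lassoCorr, ← dotProduct_mulVec]
  simp only [lassoObj, hres, dotProduct, Pi.add_apply, Finset.sum_add_distrib,
    Finset.sum_sub_distrib, ← Finset.mul_sum, Pi.sub_apply]
  ring

theorem mul_le_mul_abs_add_sub_abs {lam g x d : ℝ} (hg : |g| ≤ lam) (hgx : g * x = lam * |x|) :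
    g * d ≤ lam * (|x + d| - |x|) := by
  have : g * (x + d) ≤ lam * |x + d| := calc
    g * (x + d) ≤ |g| * |x + d| := abs_mul g (x + d) ▸ le_abs_self _
    _ ≤ lam * |x + d| := mul_le_mul_of_nonneg_right hg (abs_nonneg _)
  linarith

theorem IsLassoKKT.isLassoSolution {X : Matrix (Fin n) κ ℝ} {y : Fin n → ℝ} {lam : ℝ}
    {β : κ → ℝ} (h : IsLassoKKT X y lam β) : IsLassoSolution X y lam β := by
  intro β'
  obtain ⟨d, rfl⟩ : ∃ d, β' = β + d := ⟨β' - β, (add_sub_cancel β β').symm⟩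
  have hcorr : lassoCorr X y β ⬝ᵥ d ≤ lam * ∑ j, (|β j + d j| - |β j|) := by
    rw [Finset.mul_sum]
    exact Finset.sum_le_sum fun j _ => mul_le_mul_abs_add_sub_abs (h j).1 (h j).2
  have hquad : 0 ≤ (1 / 2) * ∑ i, (X *ᵥ d) i ^ 2 := by positivity
  rw [lassoObj_add]
  linarith

theorem IsLassoSolution.mul_lassoCorr_le {X : Matrix (Fin n) κ ℝ} {y : Fin n → ℝ} {lam : ℝ}
    {β : κ → ℝ} (h : IsLassoSolution X y lam β) (j : κ) (t : ℝ) :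
    t * lassoCorr X y β j ≤ (∑ i, X i j ^ 2) / 2 * t ^ 2 + lam * (|β j + t| - |β j|) := by
  classical
  have hmin := h (β + Pi.single j t)
  have hcol : ∀ i, (X *ᵥ Pi.single j t) i = X i j * t := fun i => by simp
  have habs : ∑ k, (|β k + (Pi.single j t : κ → ℝ) k| - |β k|) = |β j + t| - |β j| := by
    rw [Fintype.sum_eq_single j fun k hk => by simp [hk]]
    simp
  rw [lassoObj_add, dotProduct_single, habs] at hmin
  simp only [hcol, mul_pow, ← Finset.sum_mul] at hmin
  linarith

theorem nonpos_of_forall_mul_le_sq_mul {a K : ℝ} (h : ∀ ε ∈ Ioo (0 : ℝ) 1, ε * a ≤ ε ^ 2 * K) :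
    a ≤ 0 := by
  have hlim : Filter.Tendsto (fun ε : ℝ => ε * K) (nhdsWithin 0 (Ioi 0)) (nhds 0) := by
    simpa using ((continuous_mul_const K).tendsto 0).mono_left nhdsWithin_le_nhds
  refine ge_of_tendsto hlim (Filter.eventually_of_mem (Ioo_mem_nhdsGT one_pos) fun ε hε => ?_)
  have hε' := h ε hε
  rw [sq, mul_assoc] at hε'
  exact le_of_mul_le_mul_left hε' hε.1

theorem IsLassoSolution.isLassoKKT {X : Matrix (Fin n) κ ℝ} {y : Fin n → ℝ} {lam : ℝ}
    {β : κ → ℝ} (hlam : 0 ≤ lam) (h : IsLassoSolution X y lam β) : IsLassoKKT X y lam β := by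
  intro j
  set g := lassoCorr X y β j
  set C := (∑ i, X i j ^ 2) / 2
  have hstep : ∀ t, lam * (|β j + t| - |β j|) ≤ lam * |t| := fun t =>
    mul_le_mul_of_nonneg_left (by linarith [abs_add_le (β j) t]) hlam
  have hup : g - lam ≤ 0 := nonpos_of_forall_mul_le_sq_mul (K := C) fun ε hε => by
    have h1 := h.mul_lassoCorr_le j ε
    have h2 := hstep ε
    rw [abs_of_pos hε.1] at h2
    linear_combination h1 + h2
  have hlow : -g - lam ≤ 0 := nonpos_of_forall_mul_le_sq_mul (K := C) fun ε hε => by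
    have h1 := h.mul_lassoCorr_le j (-ε)
    have h2 := hstep (-ε)
    rw [abs_neg, abs_of_pos hε.1] at h2
    linear_combination h1 + h2
  have hg : |g| ≤ lam := abs_le.2 ⟨by linarith, by linarith⟩
  -- shrinking `β j` towards `0` cannot lower the objective
  have hshrink : lam * |β j| - g * β j ≤ 0 :=
    nonpos_of_forall_mul_le_sq_mul (K := β j ^ 2 * C) fun ε hε => by
      have h1 := h.mul_lassoCorr_le j (-(ε * β j))
      rw [show β j + -(ε * β j) = (1 - ε) * β j by ring, abs_mul,
        abs_of_pos (sub_pos.2 hε.2)] at h1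
      linear_combination h1
  refine ⟨hg, le_antisymm ?_ (by linarith)⟩
  calc g * β j ≤ |g| * |β j| := abs_mul g (β j) ▸ le_abs_self _
    _ ≤ lam * |β j| := mul_le_mul_of_nonneg_right hg (abs_nonneg _)

theorem lassoCorr_smul_add_smul (X : Matrix (Fin n) κ ℝ) (y₁ y₂ : Fin n → ℝ) (β₁ β₂ : κ → ℝ)
    (a b : ℝ) :
    lassoCorr X (a • y₁ + b • y₂) (a • β₁ + b • β₂)
      = a • lassoCorr X y₁ β₁ + b • lassoCorr X y₂ β₂ := by
  have hres : a • y₁ + b • y₂ - X *ᵥ (a • β₁ + b • β₂)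
      = a • (y₁ - X *ᵥ β₁) + b • (y₂ - X *ᵥ β₂) := by
    rw [mulVec_add, mulVec_smul, mulVec_smul]; module
  rw [lassoCorr, hres, add_vecMul, smul_vecMul, smul_vecMul, lassoCorr, lassoCorr]

end KKT

theorem convex_setOf_sign_eq (σ : SignType) : Convex ℝ {x : ℝ | SignType.sign x = σ} := by
  obtain rfl | rfl | rfl : σ = 0 ∨ σ = -1 ∨ σ = 1 := by cases σ <;> decide
  · rw [show {x : ℝ | SignType.sign x = 0} = {0} from ext fun _ => sign_eq_zero_iff]
    exact convex_singleton 0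
  · rw [show {x : ℝ | SignType.sign x = -1} = Iio 0 from ext fun _ => sign_eq_neg_one_iff]
    exact convex_Iio 0
  · rw [show {x : ℝ | SignType.sign x = 1} = Ioi 0 from ext fun _ => sign_eq_one_iff]
    exact convex_Ioi 0

theorem eq_mul_sign_of_mul_eq_mul_abs {lam g x : ℝ} (hx : x ≠ 0) (hgx : g * x = lam * |x|) :
    g = lam * SignType.sign x :=
  mul_right_cancel₀ hx (by rw [hgx, mul_assoc, sign_mul_self])

theorem convex_setOf_lassoKKT_coord (lam : ℝ) (σ : SignType) :
    Convex ℝ {q : ℝ × ℝ | |q.1| ≤ lam ∧ q.1 * q.2 = lam * |q.2| ∧ SignType.sign q.2 = σ} := by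
  rintro ⟨g₁, x₁⟩ ⟨hg₁, hgx₁, hs₁⟩ ⟨g₂, x₂⟩ ⟨hg₂, hgx₂, hs₂⟩ a b ha hb hab
  simp only [Prod.smul_mk, Prod.mk_add_mk, smul_eq_mul] at *
  have hs : SignType.sign (a * x₁ + b * x₂) = σ := convex_setOf_sign_eq σ hs₁ hs₂ ha hb hab
  refine ⟨abs_le.2 (convex_Icc (-lam) lam (abs_le.1 hg₁) (abs_le.1 hg₂) ha hb hab), ?_, hs⟩
  rcases eq_or_ne σ 0 with rfl | hσ
  · simp [sign_eq_zero_iff.1 hs]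
  · rw [eq_mul_sign_of_mul_eq_mul_abs (sign_ne_zero.1 (hs₁ ▸ hσ)) hgx₁,
      eq_mul_sign_of_mul_eq_mul_abs (sign_ne_zero.1 (hs₂ ▸ hσ)) hgx₂, hs₁, hs₂,
      ← sign_mul_self (a * x₁ + b * x₂), hs]
    linear_combination (lam * σ * (a * x₁ + b * x₂)) * hab

section LassoKKTSign

variable {n : ℕ} {κ : Type*} [Fintype κ]

theorem convex_setOf_exists_isLassoKKT_sign (X : Matrix (Fin n) κ ℝ) (lam : ℝ)
    (s : κ → SignType) :
    Convex ℝ {y : Fin n → ℝ | ∃ β, IsLassoKKT X y lam β ∧ ∀ j, SignType.sign (β j) = s j} := by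
  rintro y₁ ⟨β₁, hk₁, hs₁⟩ y₂ ⟨β₂, hk₂, hs₂⟩ a b ha hb hab
  have hcoord := fun j => convex_setOf_lassoKKT_coord lam (s j)
    (x := (lassoCorr X y₁ β₁ j, β₁ j)) ⟨(hk₁ j).1, (hk₁ j).2, hs₁ j⟩
    (y := (lassoCorr X y₂ β₂ j, β₂ j)) ⟨(hk₂ j).1, (hk₂ j).2, hs₂ j⟩ ha hb hab
  simp only [Prod.smul_mk, Prod.mk_add_mk, smul_eq_mul] at hcoord
  refine ⟨a • β₁ + b • β₂, fun j => ?_, fun j => (hcoord j).2.2⟩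
  simpa only [lassoCorr_smul_add_smul, Pi.add_apply, Pi.smul_apply, smul_eq_mul]
    using ⟨(hcoord j).1, (hcoord j).2.1⟩

theorem convex_setOf_sign_lassoSolution {X : Matrix (Fin n) κ ℝ} {lam : ℝ} (hlam : 0 ≤ lam)
    {ν c : Fin n → ℝ} {βhat : ℝ → κ → ℝ}
    (hβhat : ∀ z : ℝ, IsLassoSolution X (ν + z • c) lam (βhat z) ∧
      ∀ β : κ → ℝ, IsLassoSolution X (ν + z • c) lam β → β = βhat z)
    (s : κ → SignType) :
    Convex ℝ {z : ℝ | ∀ j, SignType.sign (βhat z j) = s j} := by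
  have hline : ∀ z : ℝ, AffineMap.lineMap ν (ν + c) z = ν + z • c := fun z => by
    rw [AffineMap.lineMap_apply_module]; module
  have hevent : {z : ℝ | ∀ j, SignType.sign (βhat z j) = s j} = AffineMap.lineMap ν (ν + c) ⁻¹'
      {y | ∃ β, IsLassoKKT X y lam β ∧ ∀ j, SignType.sign (β j) = s j} := by
    ext z
    simp only [mem_preimage, mem_ofPred_eq, hline]
    constructor
    · exact fun hs => ⟨βhat z, (hβhat z).1.isLassoKKT hlam, hs⟩
    · rintro ⟨β, hkkt, hs⟩
      rwa [← (hβhat z).2 β hkkt.isLassoSolution]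
  rw [hevent]
  exact (convex_setOf_exists_isLassoKKT_sign X lam s).affine_preimage _

end LassoKKTSign

section SignPattern

variable {κ : Type*} [DecidableEq κ]

def signPatternOn (M : Finset κ) (σ : M → Bool) : κ → SignType :=
  fun j => if h : j ∈ M then (if σ ⟨j, h⟩ then 1 else -1) else 0

theorem setOf_ne_zero_eq_iff_exists_sign (x : κ → ℝ) (M : Finset κ) :
    {j | x j ≠ 0} = ↑M ↔ ∃ σ : M → Bool, ∀ j, SignType.sign (x j) = signPatternOn M σ j := by
  constructor
  · intro h
    refine ⟨fun j => decide (0 < x j), fun j => ?_⟩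
    by_cases hj : j ∈ M
    · rcases ((Set.ext_iff.1 h j).2 hj).lt_or_gt with hneg | hpos
      · simp [signPatternOn, hj, sign_neg hneg, not_lt.2 hneg.le]
      · simp [signPatternOn, hj, sign_pos hpos, hpos]
    · have hx : x j = 0 := not_not.1 fun hx => hj ((Set.ext_iff.1 h j).1 hx)
      simp [signPatternOn, hj, hx]
  · rintro ⟨σ, hσ⟩
    ext j
    rw [mem_ofPred_eq, ← sign_ne_zero, hσ j, Finset.mem_coe, signPatternOn]
    split_ifs <;> simp_all

end SignPattern

/-- Conditioning on the selected model being exactly `M` restricts the line statistic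
`z` to a union of at most `2^{|M|}` intervals (one per sign vector of the active
coefficients). -/
theorem lasso_model_event_union_of_intervals {n p : ℕ}
    (X : Matrix (Fin n) (Fin p) ℝ) (lam : ℝ) (hlam : 0 < lam)
    (ν c : Fin n → ℝ)
    (βhat : ℝ → Fin p → ℝ)
    (hβhat : ∀ z : ℝ, IsLassoSolution X (ν + z • c) lam (βhat z) ∧
      ∀ β : Fin p → ℝ, IsLassoSolution X (ν + z • c) lam β → β = βhat z)
    (M : Finset (Fin p)) :
    ∃ m ≤ 2 ^ M.card, ∃ I : Fin m → Set ℝ,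
      (∀ i, (I i).OrdConnected) ∧
      {z : ℝ | {j | βhat z j ≠ 0} = (M : Set (Fin p))} = ⋃ i, I i := by
  let piece (σ : M → Bool) : Set ℝ := {z | ∀ j, SignType.sign (βhat z j) = signPatternOn M σ j}
  have hcard : Fintype.card (M → Bool) = 2 ^ M.card := by simp
  let e := (Fintype.equivFinOfCardEq hcard).symm
  refine ⟨2 ^ M.card, le_rfl, fun i => piece (e i),
    fun i => (convex_setOf_sign_lassoSolution hlam.le hβhat _).ordConnected, ?_⟩
  rw [e.surjective.iUnion_comp piece]
  ext z
  simpa only [mem_iUnion, mem_ofPred_eq, piece] using setOf_ne_zero_eq_iff_exists_sign (βhat z) M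
end

section
/- Let A be an m × n real matrix, b ∈ ℝ^m, and c, ν ∈ ℝ^n. Suppose (A·ν)_i ≤ b_i for every row i with (A·c)_i = 0, and that the index sets N = {i : (A·c)_i < 0} and P = {i : (A·c)_i > 0} are both nonempty. Define V⁻ = max_{i ∈ N} (b_i − (A·ν)_i)/(A·c)_i and V⁺ = min_{i ∈ P} (b_i − (A·ν)_i)/(A·c)_i. Then for every z ∈ ℝ, A·(ν + z·c) ≤ b (coordinatewise) if and only if V⁻ ≤ z ≤ V⁺. -/
/-- The polyhedral lemma: the intersection of the polyhedron `{y : Ay ≤ b}` with the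
line `{ν + z·c : z ∈ ℝ}` is the segment `V⁻ ≤ z ≤ V⁺`, where
`V⁻ = max_{i : (Ac)_i < 0} (b_i − (Aν)_i)/(Ac)_i` and
`V⁺ = min_{i : (Ac)_i > 0} (b_i − (Aν)_i)/(Ac)_i`, provided `(Aν)_i ≤ b_i` whenever
`(Ac)_i = 0`. -/
theorem polyhedral_lemma {m n : ℕ} (A : Matrix (Fin m) (Fin n) ℝ) (b : Fin m → ℝ)
    (c ν : Fin n → ℝ)
    (hzero : ∀ i, A.mulVec c i = 0 → A.mulVec ν i ≤ b i)
    (N P : Finset (Fin m))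
    (hN : N = Finset.univ.filter fun i => A.mulVec c i < 0)
    (hP : P = Finset.univ.filter fun i => 0 < A.mulVec c i)
    (hNne : N.Nonempty) (hPne : P.Nonempty)
    (Vminus Vplus : ℝ)
    (hVm : Vminus = N.sup' hNne fun i => (b i - A.mulVec ν i) / A.mulVec c i)
    (hVp : Vplus = P.inf' hPne fun i => (b i - A.mulVec ν i) / A.mulVec c i) :
    ∀ z : ℝ, (∀ i, A.mulVec (ν + z • c) i ≤ b i) ↔ Vminus ≤ z ∧ z ≤ Vplus := by
  have hexp : ∀ (z : ℝ) i, A.mulVec (ν + z • c) i = A.mulVec ν i + z * A.mulVec c i := by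
    intro z i
    simp [Matrix.mulVec_add, Matrix.mulVec_smul, smul_eq_mul]
  intro z
  constructor
  · intro h
    constructor
    · rw [hVm]
      apply Finset.sup'_le
      intro i hi
      rw [hN, Finset.mem_filter] at hi
      have hneg := hi.2
      have := h i
      rw [hexp] at this
      rw [div_le_iff_of_neg hneg]
      linarith
    · rw [hVp]
      apply Finset.le_inf'
      intro i hi
      rw [hP, Finset.mem_filter] at hi
      have hpos := hi.2
      have := h i
      rw [hexp] at this
      rw [le_div_iff₀ hpos]
      linarith
  · rintro ⟨h1, h2⟩ i
    rw [hexp]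
    rcases lt_trichotomy (A.mulVec c i) 0 with hlt | heq | hgt
    · have hi : i ∈ N := by rw [hN]; simp [hlt]
      have := Finset.le_sup' (fun i => (b i - A.mulVec ν i) / A.mulVec c i) hi
      have h3 : (b i - A.mulVec ν i) / A.mulVec c i ≤ z := le_trans (hVm ▸ this) h1
      rw [div_le_iff_of_neg hlt] at h3
      linarith
    · have := hzero i heq
      rw [heq]; linarith
    · have hi : i ∈ P := by rw [hP]; simp [hgt]
      have := Finset.inf'_le (fun i => (b i - A.mulVec ν i) / A.mulVec c i) hi
      have h3 : z ≤ (b i - A.mulVec ν i) / A.mulVec c i := le_trans h2 (hVp ▸ this)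
      rw [le_div_iff₀ hgt] at h3
      linarith
end

section
/- Let σ > 0, c < d, and fix x with c < x < d. Then the map μ ↦ F_{μ,σ}^{c,d}(x) = (Φ((x−μ)/σ) − Φ((c−μ)/σ)) / (Φ((d−μ)/σ) − Φ((c−μ)/σ)) is strictly decreasing in μ on ℝ. -/
open MeasureTheory ProbabilityTheory

lemma stdNormal_pdf_continuous : Continuous (gaussianPDFReal 0 1) := by
  rw [gaussianPDFReal_def]
  continuity

lemma stdNormal_pdf_pos (u : ℝ) : 0 < gaussianPDFReal 0 1 u :=
  gaussianPDFReal_pos 0 1 u one_ne_zero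

lemma stdNormalCDF_diff {a b : ℝ} (hab : a ≤ b) :
    stdNormalCDF b - stdNormalCDF a = ∫ u in a..b, gaussianPDFReal 0 1 u := by
  have h1 : Set.Iic b = Set.Iic a ∪ Set.Ioc a b := (Set.Iic_union_Ioc_eq_Iic hab).symm
  have h2 : (gaussianReal 0 1) (Set.Iic b)
      = (gaussianReal 0 1) (Set.Iic a) + (gaussianReal 0 1) (Set.Ioc a b) := by
    rw [h1, measure_union (Set.Iic_disjoint_Ioc le_rfl) measurableSet_Ioc]
  have hfin : ∀ s : Set ℝ, (gaussianReal 0 1) s ≠ ⊤ := fun s => measure_ne_top _ s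
  have h3 : stdNormalCDF b - stdNormalCDF a = ((gaussianReal 0 1) (Set.Ioc a b)).toReal := by
    rw [stdNormalCDF, stdNormalCDF, h2, ENNReal.toReal_add (hfin _) (hfin _)]
    ring
  rw [h3, gaussianReal_apply_eq_integral 0 one_ne_zero,
    ENNReal.toReal_ofReal (setIntegral_nonneg measurableSet_Ioc
      fun u _ => gaussianPDFReal_nonneg 0 1 u),
    intervalIntegral.integral_of_le hab]

lemma stdNormal_pdf_shift (u δ : ℝ) :
    gaussianPDFReal 0 1 (u - δ) = Real.exp (δ * u - δ ^ 2 / 2) * gaussianPDFReal 0 1 u := by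
  simp only [gaussianPDFReal, NNReal.coe_one, mul_one, sub_zero]
  rw [mul_left_comm, ← Real.exp_add]
  congr 1
  rw [Real.exp_eq_exp]
  ring

set_option maxHeartbeats 1000000 in
/-- For fixed `σ > 0`, `c < x < d`, the truncated-Gaussian CDF value
`F_{μ,σ}^{c,d}(x)` is strictly decreasing as a function of the mean `μ`. -/
theorem truncated_gaussian_cdf_strictAnti_in_mean (σ c d x : ℝ)
    (hσ : 0 < σ) (hcd : c < d) (hcx : c < x) (hxd : x < d) :
    StrictAnti fun μ : ℝ =>
      (stdNormalCDF ((x - μ) / σ) - stdNormalCDF ((c - μ) / σ)) /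
      (stdNormalCDF ((d - μ) / σ) - stdNormalCDF ((c - μ) / σ)) := by
  intro μ₁ μ₂ hμ
  simp only
  set φ := gaussianPDFReal 0 1 with hφ
  set a := (c - μ₁) / σ with ha
  set t := (x - μ₁) / σ with ht
  set b := (d - μ₁) / σ with hb
  set δ := (μ₂ - μ₁) / σ with hδ
  have hδpos : 0 < δ := div_pos (by linarith) hσ
  have hat : a < t := (div_lt_div_iff_of_pos_right hσ).mpr (by linarith)
  have htb : t < b := (div_lt_div_iff_of_pos_right hσ).mpr (by linarith)
  have ha2 : (c - μ₂) / σ = a - δ := by rw [ha, hδ, div_sub_div_same]; congr 1; ring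
  have ht2 : (x - μ₂) / σ = t - δ := by rw [ht, hδ, div_sub_div_same]; congr 1; ring
  have hb2 : (d - μ₂) / σ = b - δ := by rw [hb, hδ, div_sub_div_same]; congr 1; ring
  -- integrability helpers
  have hcont : Continuous φ := stdNormal_pdf_continuous
  have hint : ∀ p q : ℝ, IntervalIntegrable φ volume p q :=
    fun p q => hcont.intervalIntegrable p q
  have hcont2 : Continuous fun u => φ (u - δ) := hcont.comp (by continuity)
  have hint2 : ∀ p q : ℝ, IntervalIntegrable (fun u => φ (u - δ)) volume p q :=
    fun p q => hcont2.intervalIntegrable p q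
  set N₁ := ∫ u in a..t, φ u with hN₁
  set M₁ := ∫ u in t..b, φ u with hM₁
  set N₂ := ∫ u in a..t, φ (u - δ) with hN₂
  set M₂ := ∫ u in t..b, φ (u - δ) with hM₂
  set K := Real.exp (δ * t - δ ^ 2 / 2) with hK
  have hKpos : 0 < K := Real.exp_pos _
  -- rewrite CDF differences as integrals
  have e1 : stdNormalCDF t - stdNormalCDF a = N₁ := stdNormalCDF_diff hat.le
  have e1' : stdNormalCDF b - stdNormalCDF a = N₁ + M₁ := by
    rw [stdNormalCDF_diff (hat.trans htb).le, hN₁, hM₁,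
      intervalIntegral.integral_add_adjacent_intervals (hint a t) (hint t b)]
  have e2 : stdNormalCDF (t - δ) - stdNormalCDF (a - δ) = N₂ := by
    rw [stdNormalCDF_diff (by linarith), hN₂, intervalIntegral.integral_comp_sub_right φ δ]
  have e2' : stdNormalCDF (b - δ) - stdNormalCDF (a - δ) = N₂ + M₂ := by
    rw [stdNormalCDF_diff (by linarith), hN₂, hM₂,
      intervalIntegral.integral_comp_sub_right φ δ,
      intervalIntegral.integral_comp_sub_right φ δ,
      intervalIntegral.integral_add_adjacent_intervals (hint _ _) (hint _ _)]
  -- positivity of all four pieces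
  have hN₁pos : 0 < N₁ := intervalIntegral.intervalIntegral_pos_of_pos_on (hint a t)
    (fun u _ => stdNormal_pdf_pos u) hat
  have hM₁pos : 0 < M₁ := intervalIntegral.intervalIntegral_pos_of_pos_on (hint t b)
    (fun u _ => stdNormal_pdf_pos u) htb
  have hN₂pos : 0 < N₂ := intervalIntegral.intervalIntegral_pos_of_pos_on (hint2 a t)
    (fun u _ => stdNormal_pdf_pos _) hat
  have hM₂pos : 0 < M₂ := intervalIntegral.intervalIntegral_pos_of_pos_on (hint2 t b)
    (fun u _ => stdNormal_pdf_pos _) htb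
  -- key strict inequalities
  have key1 : N₂ < K * N₁ := by
    have hpos : 0 < ∫ u in a..t, (K * φ u - φ (u - δ)) := by
      apply intervalIntegral.intervalIntegral_pos_of_pos_on
        (((hint a t).const_mul K).sub (hint2 a t)) ?_ hat
      intro u hu
      simp only [hφ]
      rw [stdNormal_pdf_shift, sub_pos, hK]
      exact mul_lt_mul_of_pos_right
        (Real.exp_lt_exp.mpr (by nlinarith [hu.2])) (stdNormal_pdf_pos u)
    rw [intervalIntegral.integral_sub ((hint a t).const_mul K) (hint2 a t),
      intervalIntegral.integral_const_mul] at hpos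
    linarith
  have key2 : K * M₁ < M₂ := by
    have hpos : 0 < ∫ u in t..b, (φ (u - δ) - K * φ u) := by
      apply intervalIntegral.intervalIntegral_pos_of_pos_on
        ((hint2 t b).sub ((hint t b).const_mul K)) ?_ htb
      intro u hu
      simp only [hφ]
      rw [stdNormal_pdf_shift, sub_pos, hK]
      exact mul_lt_mul_of_pos_right
        (Real.exp_lt_exp.mpr (by nlinarith [hu.1])) (stdNormal_pdf_pos u)
    rw [intervalIntegral.integral_sub (hint2 t b) ((hint t b).const_mul K),
      intervalIntegral.integral_const_mul] at hpos
    linarith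
  -- conclude
  rw [ha2, ht2, hb2, e2, e2', e1, e1', div_lt_div_iff₀ (by linarith) (by linarith)]
  nlinarith [mul_pos hN₂pos hM₁pos]
end
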